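/- arXiv:2208.06015 — 4 statements merged into one kernel-verified Lean document; each statement's English description precedes it below -/
import Mathlib

section
/- Let G be a planar graph and suppose there is a set W of k ≥ 1 vertices such that G − W has treewidth at most w ≥ 1. Then the treewidth of G is at most 3·c·w·√k, where c is the constant from the planar grid minor theorem (i.e., any planar graph of treewidth at least c·m has an m × m grid minor). -/
/-- A tree decomposition of a graph `G`. -/
structure TreeDecomp {V : Type} (G : SimpleGraph V) where
  ι : Type
  T : SimpleGraph ι
  isTree : T.IsTree
  bag : ι → Finset V
  bag_cover : ∀ v : V, ∃ i, v ∈ bag i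
  bag_edge : ∀ u v : V, G.Adj u v → ∃ i, u ∈ bag i ∧ v ∈ bag i
  bag_coherent : ∀ v : V, (T.induce {i | v ∈ bag i}).Connected

/-- `G` has treewidth at most `w`. -/
def TreewidthLE {V : Type} (G : SimpleGraph V) (w : ℕ) : Prop :=
  ∃ td : TreeDecomp G, ∀ i, (td.bag i).card ≤ w + 1

/-- The treewidth of `G`. -/
noncomputable def treewidth {V : Type} (G : SimpleGraph V) : ℕ :=
  sInf {w | TreewidthLE G w}

/-- `Hm` is a minor of `G` (via branch sets). -/
def IsMinorOf {α β : Type} (Hm : SimpleGraph α) (G : SimpleGraph β) : Prop :=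
  ∃ φ : α → Set β,
    (∀ a, (G.induce (φ a)).Connected) ∧
    (∀ a b, a ≠ b → Disjoint (φ a) (φ b)) ∧
    (∀ a b, Hm.Adj a b → ∃ x ∈ φ a, ∃ y ∈ φ b, G.Adj x y)

/-- The m × m grid graph. -/
def gridGraph (m : ℕ) : SimpleGraph (Fin m × Fin m) :=
  (SimpleGraph.pathGraph m).boxProd (SimpleGraph.pathGraph m)

open SimpleGraph

variable {V : Type}

/-- Reachability within a vertex set `S`. -/
inductive ReachIn (G : SimpleGraph V) (S : Set V) : V → V → Prop
  | refl {u} (hu : u ∈ S) : ReachIn G S u u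
  | tail {u v w} (h : ReachIn G S u v) (ha : G.Adj v w) (hw : w ∈ S) : ReachIn G S u w

namespace ReachIn

variable {G : SimpleGraph V} {S S' : Set V} {u v w : V}

lemma mem_right (h : ReachIn G S u v) : v ∈ S := by
  induction h with
  | refl hu => exact hu
  | tail _ _ hw _ => exact hw

lemma mem_left (h : ReachIn G S u v) : u ∈ S := by
  induction h with
  | refl hu => exact hu
  | tail _ _ _ ih => exact ih

lemma mono (hS : S ⊆ S') (h : ReachIn G S u v) : ReachIn G S' u v := by
  induction h with
  | refl hu => exact .refl (hS hu)
  | tail _ ha hw ih => exact .tail ih ha (hS hw)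

lemma trans (h : ReachIn G S u v) (h' : ReachIn G S v w) : ReachIn G S u w := by
  induction h' with
  | refl _ => exact h
  | tail _ ha hw ih => exact .tail ih ha hw

lemma head (ha : G.Adj u v) (hu : u ∈ S) (h : ReachIn G S v w) : ReachIn G S u w :=
  .trans (.tail (.refl hu) ha h.mem_left) h

lemma symm (h : ReachIn G S u v) : ReachIn G S v u := by
  induction h with
  | refl hu => exact .refl hu
  | tail h ha hw ih => exact .head ha.symm hw ih

lemma reachable_induce (h : ReachIn G S u v) :
    (G.induce S).Reachable ⟨u, h.mem_left⟩ ⟨v, h.mem_right⟩ := by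
  induction h with
  | refl hu => rfl
  | tail h ha hw ih =>
      exact ih.trans (SimpleGraph.Adj.reachable (by simpa using ha))

end ReachIn

lemma reachIn_of_walk {G : SimpleGraph V} {S : Set V} {x y : ↥S}
    (p : (G.induce S).Walk x y) : ReachIn G S x.1 y.1 := by
  induction p with
  | nil => exact .refl (Subtype.mem _)
  | cons ha _ ih => exact .head (by simpa using ha) (Subtype.mem _) ih

lemma reachIn_of_connected {G : SimpleGraph V} {S : Set V} (h : (G.induce S).Connected)
    {u v : V} (hu : u ∈ S) (hv : v ∈ S) : ReachIn G S u v := by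
  obtain ⟨p⟩ := h.preconnected ⟨u, hu⟩ ⟨v, hv⟩
  exact reachIn_of_walk p

lemma connected_induce_of_reachIn {G : SimpleGraph V} {S : Set V}
    (hne : S.Nonempty) (h : ∀ u ∈ S, ∀ v ∈ S, ReachIn G S u v) :
    (G.induce S).Connected := by
  have : Nonempty ↥S := ⟨⟨hne.choose, hne.choose_spec⟩⟩
  refine ⟨fun x y => ?_⟩
  have := (h x.1 x.2 y.1 y.2).reachable_induce
  simpa using this

/-- A walk in `G` whose support lies in `S`, from a `ReachIn`. -/
lemma ReachIn.exists_walk {G : SimpleGraph V} {S : Set V} {u v : V}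
    (h : ReachIn G S u v) : ∃ p : G.Walk u v, ∀ z ∈ p.support, z ∈ S := by
  induction h with
  | refl hu => exact ⟨.nil, by simpa using hu⟩
  | tail h ha hw ih =>
      obtain ⟨p, hp⟩ := ih
      refine ⟨p.concat ha, fun z hz => ?_⟩
      rw [SimpleGraph.Walk.support_concat] at hz
      rw [List.mem_append] at hz
      rcases hz with hz | hz
      · exact hp _ hz
      · simp at hz; subst hz; exact hw

variable {ι : Type} {T : SimpleGraph ι}

noncomputable def tpath (hT : T.IsTree) (i j : ι) : T.Walk i j :=
  (hT.existsUnique_path i j).choose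

lemma tpath_isPath (hT : T.IsTree) (i j : ι) : (tpath hT i j).IsPath :=
  (hT.existsUnique_path i j).choose_spec.1

lemma tpath_unique (hT : T.IsTree) {i j : ι} {p : T.Walk i j} (hp : p.IsPath) :
    p = tpath hT i j :=
  (hT.existsUnique_path i j).choose_spec.2 p hp

lemma mem_tpath_symm (hT : T.IsTree) {i j z : ι} (h : z ∈ (tpath hT i j).support) :
    z ∈ (tpath hT j i).support := by
  rw [← tpath_unique hT (tpath_isPath hT i j).reverse]
  simpa using h

lemma start_mem_tpath (hT : T.IsTree) (i j : ι) : i ∈ (tpath hT i j).support :=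
  SimpleGraph.Walk.start_mem_support _

lemma end_mem_tpath (hT : T.IsTree) (i j : ι) : j ∈ (tpath hT i j).support :=
  SimpleGraph.Walk.end_mem_support _

/-- first vertex on a path satisfying `Pr`. -/
lemma exists_first {Pr : ι → Prop} : ∀ {x y : ι} (q : T.Walk x y), q.IsPath → Pr y →
    ∃ (m : ι) (r : T.Walk x m), r.IsPath ∧ Pr m ∧ (∀ z ∈ r.support, Pr z → z = m) ∧
      (∀ z ∈ r.support, z ∈ q.support) := by
  intro x y q
  induction q with
  | nil =>
      intro _ hy
      exact ⟨_, .nil, SimpleGraph.Walk.IsPath.nil, hy, by simp, by simp⟩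
  | @cons x x' y h q ih =>
      intro hq hy
      by_cases hx : Pr x
      · exact ⟨_, .nil, SimpleGraph.Walk.IsPath.nil, hx, by simp, by simp⟩
      · obtain ⟨m, r, hr, hm, hfirst, hsub⟩ := ih hq.of_cons hy
        refine ⟨m, .cons h r, hr.cons ?_, hm, ?_, ?_⟩
        · intro hmem
          exact ((SimpleGraph.Walk.cons_isPath_iff h q).1 hq).2 (hsub _ hmem)
        · intro z hz hPz
          rw [SimpleGraph.Walk.support_cons, List.mem_cons] at hz
          rcases hz with rfl | hz
          · exact absurd hPz hx
          · exact hfirst z hz hPz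
        · intro z hz
          rw [SimpleGraph.Walk.support_cons, List.mem_cons] at hz
          rcases hz with rfl | hz
          · exact SimpleGraph.Walk.start_mem_support _
          · exact (SimpleGraph.Walk.support_cons h q ▸ List.mem_cons_of_mem _ (hsub z hz))

lemma tree_median (hT : T.IsTree) (a b c : ι) :
    ∃ m, m ∈ (tpath hT a b).support ∧ m ∈ (tpath hT a c).support ∧
      m ∈ (tpath hT b c).support := by
  classical
  set p := tpath hT a b with hp
  obtain ⟨m, r, hr, hm, hfirst, hsub⟩ :=
    exists_first (Pr := fun z => z ∈ p.support) (tpath hT c a) (tpath_isPath hT c a)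
      (SimpleGraph.Walk.start_mem_support _)
  -- m ∈ p.support; r : walk c → m with support in tpath c a
  have hmq : m ∈ (tpath hT a c).support :=
    mem_tpath_symm hT (hsub m (SimpleGraph.Walk.end_mem_support _))
  -- build path from b to c through m
  have hd : (p.dropUntil m hm).IsPath := (tpath_isPath hT a b).dropUntil hm
  set w : T.Walk b c := ((p.dropUntil m hm).reverse).append r.reverse with hw
  have hwpath : w.IsPath := by
    rw [SimpleGraph.Walk.isPath_def, SimpleGraph.Walk.support_append]
    refine List.Nodup.append ?_ ?_ ?_
    · simpa using hd.reverse.support_nodup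
    · exact (List.tail_sublist _).nodup hr.reverse.support_nodup
    · intro z hz1 hz2
      have hz1' : z ∈ p.support := by
        have := SimpleGraph.Walk.support_reverse (p.dropUntil m hm) ▸ hz1
        exact SimpleGraph.Walk.support_dropUntil_subset p hm (List.mem_reverse.1 this)
      have hzr : z ∈ r.support ∧ z ≠ m := by
        have hrev : r.reverse.support = m :: r.reverse.support.tail := by
          rw [← SimpleGraph.Walk.support_eq_cons]
        have hzmem : z ∈ r.reverse.support := List.mem_of_mem_tail hz2
        have hnd := hr.reverse.support_nodup
        constructor
        · simpa using hzmem
        · intro rfl'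
          rw [hrev] at hnd
          exact (List.nodup_cons.1 hnd).1 (rfl' ▸ hz2)
      exact hzr.2 (hfirst z hzr.1 hz1')
  have hweq : w = tpath hT b c := tpath_unique hT hwpath
  refine ⟨m, hm, hmq, ?_⟩
  rw [← hweq, hw, SimpleGraph.Walk.mem_support_append_iff]
  left; simp
/-- Path-closed subsets of a tree. -/
def PC (hT : T.IsTree) (S : Set ι) : Prop :=
  ∀ i ∈ S, ∀ j ∈ S, ∀ z ∈ (tpath hT i j).support, z ∈ S

lemma PC.inter {hT : T.IsTree} {S S' : Set ι} (h : PC hT S) (h' : PC hT S') :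
    PC hT (S ∩ S') := fun i hi j hj z hz =>
  ⟨h i hi.1 j hj.1 z hz, h' i hi.2 j hj.2 z hz⟩

lemma pc_of_reachIn {hT : T.IsTree} {S : Set ι}
    (h : ∀ i ∈ S, ∀ j ∈ S, ReachIn T S i j) : PC hT S := by
  classical
  intro i hi j hj z hz
  obtain ⟨p, hp⟩ := (h i hi j hj).exists_walk
  have : p.bypass = tpath hT i j := tpath_unique hT p.bypass_isPath
  exact hp z (p.support_bypass_subset (this ▸ hz))

lemma pc_triple {hT : T.IsTree} {S₁ S₂ S₃ : Set ι} (h1 : PC hT S₁) (h2 : PC hT S₂)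
    (h3 : PC hT S₃) (h12 : (S₁ ∩ S₂).Nonempty) (h13 : (S₁ ∩ S₃).Nonempty)
    (h23 : (S₂ ∩ S₃).Nonempty) : (S₁ ∩ S₂ ∩ S₃).Nonempty := by
  obtain ⟨a, ha1, ha2⟩ := h12
  obtain ⟨b, hb1, hb3⟩ := h13
  obtain ⟨c, hc2, hc3⟩ := h23
  obtain ⟨m, hab, hac, hbc⟩ := tree_median hT a b c
  exact ⟨m, ⟨⟨h1 a ha1 b hb1 m hab, h2 a ha2 c hc2 m hac⟩, h3 b hb3 c hc3 m hbc⟩⟩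

lemma helly_aux (hT : T.IsTree) :
    ∀ (n : ℕ) (L : List (Set ι)), L.length = n → L ≠ [] → (∀ S ∈ L, PC hT S) →
      (∀ S ∈ L, ∀ S' ∈ L, (S ∩ S').Nonempty) → ∃ m, ∀ S ∈ L, m ∈ S := by
  intro n
  induction n with
  | zero => intro L hlen hne; exact absurd (List.length_eq_zero_iff.1 hlen) hne
  | succ n ih =>
      rintro (_ | ⟨A, L2⟩) hlen hne hpc hpair
      · exact absurd rfl hne
      rcases eq_or_ne L2 [] with rfl | hL2
      · obtain ⟨m, hm⟩ := hpair A (by simp) A (by simp)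
        exact ⟨m, by simpa using hm.1⟩
      · set L3 := L2.map (fun S => S ∩ A) with hL3
        have hlen3 : L3.length = n := by
          simpa [hL3] using Nat.succ_injective (by simpa using hlen)
        have hne3 : L3 ≠ [] := by simpa [hL3] using hL2
        have hmem : ∀ B ∈ L3, ∃ S ∈ L2, B = S ∩ A := by
          intro B hB
          obtain ⟨S, hS, rfl⟩ := List.mem_map.1 hB
          exact ⟨S, hS, rfl⟩
        have hpc3 : ∀ B ∈ L3, PC hT B := by
          intro B hB
          obtain ⟨S, hS, rfl⟩ := hmem B hB
          exact (hpc S (by simp [hS])).inter (hpc A (by simp))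
        have hpair3 : ∀ B ∈ L3, ∀ B' ∈ L3, (B ∩ B').Nonempty := by
          intro B hB B' hB'
          obtain ⟨S, hS, rfl⟩ := hmem B hB
          obtain ⟨S', hS', rfl⟩ := hmem B' hB'
          have := pc_triple (hpc S (by simp [hS])) (hpc S' (by simp [hS']))
            (hpc A (by simp)) (hpair S (by simp [hS]) S' (by simp [hS']))
            (hpair S (by simp [hS]) A (by simp)) (hpair S' (by simp [hS']) A (by simp))
          obtain ⟨m, ⟨⟨h1, h2⟩, h3⟩⟩ := this
          exact ⟨m, ⟨⟨h1, h3⟩, h2, h3⟩⟩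
        obtain ⟨m, hm⟩ := ih L3 hlen3 hne3 hpc3 hpair3
        refine ⟨m, ?_⟩
        rintro S hS
        rcases List.mem_cons.1 hS with rfl | hS
        · obtain ⟨B, hB⟩ := List.exists_mem_of_ne_nil L2 hL2
          exact (hm _ (List.mem_map_of_mem hB)).2
        · exact (hm _ (List.mem_map_of_mem hS)).1

lemma helly (hT : T.IsTree) (L : List (Set ι)) (hne : L ≠ [])
    (hpc : ∀ S ∈ L, PC hT S) (hpair : ∀ S ∈ L, ∀ S' ∈ L, (S ∩ S').Nonempty) :
    ∃ m, ∀ S ∈ L, m ∈ S :=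
  helly_aux hT L.length L rfl hne hpc hpair
section Glue
variable {α : Type} {H : SimpleGraph α} (td : TreeDecomp H)

/-- The set of tree nodes whose bag meets `C`. -/
def nodes (C : Set α) : Set td.ι := {i | ∃ v ∈ C, v ∈ td.bag i}

lemma reachIn_nodes_single {v : α} {C : Set α} (hv : v ∈ C) {i j : td.ι}
    (hi : v ∈ td.bag i) (hj : v ∈ td.bag j) : ReachIn td.T (nodes td C) i j := by
  have h := reachIn_of_connected (td.bag_coherent v) (u := i) (v := j) hi hj
  exact h.mono (fun t ht => ⟨v, hv, ht⟩)

lemma reachIn_nodes {C : Set α} {u v : α} (h : ReachIn H C u v) :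
    ∀ i, u ∈ td.bag i → ∀ j, v ∈ td.bag j → ReachIn td.T (nodes td C) i j := by
  induction h with
  | refl hu => exact fun i hi j hj => reachIn_nodes_single td hu hi hj
  | tail h ha hw ih =>
      intro i hi j hj
      obtain ⟨t, htv, htw⟩ := td.bag_edge _ _ ha
      exact (ih i hi t htv).trans (reachIn_nodes_single td hw htw hj)

lemma nodes_connected {C : Set α} (hC : (H.induce C).Connected) :
    ∀ i ∈ nodes td C, ∀ j ∈ nodes td C, ReachIn td.T (nodes td C) i j := by
  rintro i ⟨u, hu, hui⟩ j ⟨v, hv, hvj⟩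
  exact reachIn_nodes td (reachIn_of_connected hC hu hv) i hui j hvj

lemma nodes_pc {C : Set α} (hC : (H.induce C).Connected) : PC td.isTree (nodes td C) :=
  pc_of_reachIn (nodes_connected td hC)

lemma nodes_nonempty_inter {C D : Set α}
    (h : (∃ u, u ∈ C ∧ u ∈ D) ∨ (∃ u ∈ C, ∃ v ∈ D, H.Adj u v)) :
    (nodes td C ∩ nodes td D).Nonempty := by
  rcases h with ⟨u, hu, hu'⟩ | ⟨u, hu, v, hv, ha⟩
  · obtain ⟨i, hi⟩ := td.bag_cover u
    exact ⟨i, ⟨u, hu, hi⟩, ⟨u, hu', hi⟩⟩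
  · obtain ⟨i, hi, hi'⟩ := td.bag_edge u v ha
    exact ⟨i, ⟨u, hu, hi⟩, ⟨v, hv, hi'⟩⟩

/-- A bramble (list form): pairwise touching connected sets. In any tree
decomposition some bag meets every set of the bramble. -/
lemma bramble_hit (L : List (Set α)) (hne : L ≠ [])
    (hconn : ∀ B ∈ L, (H.induce B).Connected)
    (htouch : ∀ B ∈ L, ∀ B' ∈ L,
      (∃ u, u ∈ B ∧ u ∈ B') ∨ (∃ u ∈ B, ∃ v ∈ B', H.Adj u v)) :
    ∃ t, ∀ B ∈ L, ∃ v ∈ B, v ∈ td.bag t := by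
  obtain ⟨m, hm⟩ := helly td.isTree (L.map (nodes td))
    (by simpa using hne)
    (by rintro S hS
        obtain ⟨B, hB, rfl⟩ := List.mem_map.1 hS
        exact nodes_pc td (hconn B hB))
    (by rintro S hS S' hS'
        obtain ⟨B, hB, rfl⟩ := List.mem_map.1 hS
        obtain ⟨B', hB', rfl⟩ := List.mem_map.1 hS'
        exact nodes_nonempty_inter td (htouch B hB B' hB'))
  refine ⟨m, fun B hB => ?_⟩
  exact hm _ (List.mem_map_of_mem hB)

end Glue
section Seg
variable {V : Type} {G : SimpleGraph V} {S : Set V}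

lemma reachIn_seg_forward (f : ℕ → V) (lo hi : ℕ)
    (hmem : ∀ t, lo ≤ t → t ≤ hi → f t ∈ S)
    (hadj : ∀ t, lo ≤ t → t < hi → G.Adj (f t) (f (t + 1))) :
    ∀ b, lo ≤ b → b ≤ hi → ReachIn G S (f lo) (f b) := by
  intro b
  induction b with
  | zero =>
      intro h1 h2
      have hlo : lo = 0 := by omega
      subst hlo
      exact .refl (hmem 0 le_rfl h2)
  | succ b ih =>
      intro h1 h2
      rcases Nat.lt_or_ge b lo with hb | hb
      · have : lo = b + 1 := by omega
        exact this ▸ .refl (hmem lo le_rfl (this ▸ h2))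
      · exact .tail (ih hb (by omega)) (hadj b hb (by omega)) (hmem _ (by omega) h2)

lemma reachIn_seg (f : ℕ → V) (lo hi : ℕ)
    (hmem : ∀ t, lo ≤ t → t ≤ hi → f t ∈ S)
    (hadj : ∀ t, lo ≤ t → t < hi → G.Adj (f t) (f (t + 1)))
    (a b : ℕ) (ha1 : lo ≤ a) (ha2 : a ≤ hi) (hb1 : lo ≤ b) (hb2 : b ≤ hi) :
    ReachIn G S (f a) (f b) :=
  (reachIn_seg_forward f lo hi hmem hadj a ha1 ha2).symm.trans
    (reachIn_seg_forward f lo hi hmem hadj b hb1 hb2)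

end Seg

section Grid
variable {n : ℕ}

lemma grid_adj_row {x x' y : Fin n} (h : x.val + 1 = x'.val) :
    (gridGraph n).Adj (x, y) (x', y) := by
  rw [gridGraph, SimpleGraph.boxProd_adj]
  exact Or.inl ⟨SimpleGraph.pathGraph_adj.2 (Or.inl h), rfl⟩

lemma grid_adj_col {x y y' : Fin n} (h : y.val + 1 = y'.val) :
    (gridGraph n).Adj (x, y) (x, y') := by
  rw [gridGraph, SimpleGraph.boxProd_adj]
  exact Or.inr ⟨SimpleGraph.pathGraph_adj.2 (Or.inl h), rfl⟩

/-- clamp a natural into `Fin n`. -/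
def fc (hn : 2 ≤ n) (t : ℕ) : Fin n := ⟨min t (n - 1), by omega⟩

lemma fc_val (hn : 2 ≤ n) {t : ℕ} (h : t ≤ n - 1) : (fc hn t).val = t := by
  simp [fc]; omega

lemma fc_eq (hn : 2 ≤ n) (x : Fin n) : fc hn x.val = x := by
  have := x.isLt; exact Fin.ext (by simp [fc]; omega)

/-- cross bramble element. -/
def cross (i j : Fin n) : Set (Fin n × Fin n) :=
  {p | (p.1 = i ∨ p.2 = j) ∧ p.1.val ≤ n - 2 ∧ p.2.val ≤ n - 2}

def lastRow : Set (Fin n × Fin n) := {p | p.1.val = n - 1}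

def lastCol : Set (Fin n × Fin n) := {p | p.2.val = n - 1 ∧ p.1.val ≠ n - 1}

lemma cross_reach_center (hn : 2 ≤ n) {i j : Fin n} (hi : i.val ≤ n - 2)
    (hj : j.val ≤ n - 2) : ∀ p ∈ cross i j, ReachIn (gridGraph n) (cross i j) p (i, j) := by
  rintro ⟨x, y⟩ ⟨hxy, hx2, hy2⟩
  rcases hxy with rfl | rfl
  · -- same column, move vertically from y to j
    have := reachIn_seg (S := cross x j) (fun t => (x, fc hn t)) 0 (n - 2)
      (fun t _ ht2 => ⟨Or.inl rfl, hx2, by rw [fc_val hn (by omega)]; exact ht2⟩)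
      (fun t _ ht2 => grid_adj_col (by rw [fc_val hn (by omega), fc_val hn (by omega)]))
      y.val j.val (Nat.zero_le _) hy2 (Nat.zero_le _) hj
    simpa [fc_eq hn] using this
  · -- same row, move horizontally from x to i
    have := reachIn_seg (S := cross i y) (fun t => (fc hn t, y)) 0 (n - 2)
      (fun t _ ht2 => ⟨Or.inr rfl, by rw [fc_val hn (by omega)]; exact ht2, hy2⟩)
      (fun t _ ht2 => grid_adj_row (by rw [fc_val hn (by omega), fc_val hn (by omega)]))
      x.val i.val (Nat.zero_le _) hx2 (Nat.zero_le _) hi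
    simpa [fc_eq hn] using this

lemma cross_connected (hn : 2 ≤ n) {i j : Fin n} (hi : i.val ≤ n - 2)
    (hj : j.val ≤ n - 2) : ((gridGraph n).induce (cross i j)).Connected := by
  refine connected_induce_of_reachIn ⟨(i, j), Or.inl rfl, hi, hj⟩ (fun u hu v hv => ?_)
  exact (cross_reach_center hn hi hj u hu).trans (cross_reach_center hn hi hj v hv).symm

lemma lastRow_connected (hn : 2 ≤ n) : ((gridGraph n).induce (lastRow (n := n))).Connected := by
  have hfl : (⟨n - 1, by omega⟩ : Fin n).val = n - 1 := rfl
  refine connected_induce_of_reachIn ⟨(⟨n - 1, by omega⟩, ⟨0, by omega⟩), hfl⟩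
    (fun u hu v hv => ?_)
  have key : ∀ p ∈ (lastRow (n := n)), ReachIn (gridGraph n) (lastRow (n := n)) p
      (⟨n - 1, by omega⟩, ⟨0, by omega⟩) := by
    rintro ⟨x, y⟩ hx
    have hx' : x = (⟨n - 1, by omega⟩ : Fin n) := Fin.ext hx
    rw [hx']
    have := reachIn_seg (S := (lastRow (n := n))) (fun t => (⟨n - 1, by omega⟩, fc hn t))
      0 (n - 1) (fun t _ _ => rfl)
      (fun t _ ht2 => grid_adj_col (by rw [fc_val hn (by omega), fc_val hn (by omega)]))
      y.val 0 (Nat.zero_le _) (by omega) (Nat.zero_le _) (Nat.zero_le _)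
    have h0 : fc hn 0 = (⟨0, by omega⟩ : Fin n) := Fin.ext (by simp [fc])
    simpa [fc_eq hn, h0] using this
  exact (key u hu).trans (key v hv).symm

lemma lastCol_connected (hn : 2 ≤ n) : ((gridGraph n).induce (lastCol (n := n))).Connected := by
  have h0 : ((⟨0, by omega⟩ : Fin n), (⟨n - 1, by omega⟩ : Fin n)) ∈ lastCol (n := n) :=
    ⟨rfl, by simp; omega⟩
  refine connected_induce_of_reachIn ⟨_, h0⟩ (fun u hu v hv => ?_)
  have key : ∀ p ∈ (lastCol (n := n)), ReachIn (gridGraph n) (lastCol (n := n)) p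
      ((⟨0, by omega⟩ : Fin n), (⟨n - 1, by omega⟩ : Fin n)) := by
    rintro ⟨x, y⟩ ⟨hy, hx⟩
    have hy' : y = (⟨n - 1, by omega⟩ : Fin n) := Fin.ext hy
    rw [hy']
    have := reachIn_seg (S := (lastCol (n := n))) (fun t => (fc hn t, ⟨n - 1, by omega⟩))
      0 (n - 2) (fun t _ ht2 => ⟨rfl, by rw [fc_val hn (by omega)]; omega⟩)
      (fun t _ ht2 => grid_adj_row (by rw [fc_val hn (by omega), fc_val hn (by omega)]))
      x.val 0 (Nat.zero_le _)
      (by have := x.isLt; have hx' : x.val ≠ n - 1 := hx; omega)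
      (Nat.zero_le _) (Nat.zero_le _)
    have h0 : fc hn 0 = (⟨0, by omega⟩ : Fin n) := Fin.ext (by simp [fc])
    simpa [fc_eq hn, h0] using this
  exact (key u hu).trans (key v hv).symm

end Grid
section GridBound
variable {n : ℕ}

lemma grid_hit_card (hn : 2 ≤ n) (S : Finset (Fin n × Fin n))
    (hcross : ∀ i j : Fin n, i.val ≤ n - 2 → j.val ≤ n - 2 → ∃ p ∈ S, p ∈ cross i j)
    (hrow : ∃ p ∈ S, p ∈ lastRow (n := n)) (hcol : ∃ p ∈ S, p ∈ lastCol (n := n)) :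
    n + 1 ≤ S.card := by
  classical
  set S' := S.filter (fun p => p.1.val ≤ n - 2 ∧ p.2.val ≤ n - 2) with hS'def
  have hS' : n - 1 ≤ S'.card := by
    by_contra hcon
    push_neg at hcon
    have hfind : ∀ f : Fin n × Fin n → ℕ, (∀ p ∈ S', f p ≤ n - 2) →
        ∃ a, a ≤ n - 2 ∧ ∀ p ∈ S', f p ≠ a := by
      intro f hf
      have hsub : S'.image f ⊆ Finset.range (n - 1) := by
        intro a ha
        obtain ⟨p, hp, rfl⟩ := Finset.mem_image.1 ha
        exact Finset.mem_range.2 (by have := hf p hp; omega)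
      have hns : ¬ (Finset.range (n - 1) ⊆ S'.image f) := by
        intro h
        have h1 := Finset.card_le_card h
        have h2 := Finset.card_image_le (s := S') (f := f)
        rw [Finset.card_range] at h1
        omega
      obtain ⟨a, har, hanot⟩ := Finset.not_subset.1 hns
      refine ⟨a, by have := Finset.mem_range.1 har; omega, fun p hp hfp => ?_⟩
      exact hanot (Finset.mem_image.2 ⟨p, hp, hfp⟩)
    obtain ⟨i0, hi0le, hi0⟩ := hfind (fun p => p.1.val) (fun p hp => (Finset.mem_filter.1 hp).2.1)
    obtain ⟨j0, hj0le, hj0⟩ := hfind (fun p => p.2.val) (fun p hp => (Finset.mem_filter.1 hp).2.2)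
    obtain ⟨p, hpS, hpc⟩ := hcross ⟨i0, by omega⟩ ⟨j0, by omega⟩ hi0le hj0le
    obtain ⟨hor, h1, h2⟩ := hpc
    have hpS' : p ∈ S' := Finset.mem_filter.2 ⟨hpS, h1, h2⟩
    rcases hor with h | h
    · exact hi0 p hpS' (by rw [h])
    · exact hj0 p hpS' (by rw [h])
  obtain ⟨r, hrS, hr⟩ := hrow
  obtain ⟨l, hlS, hl2, hl1⟩ := hcol
  have hrS' : r ∉ S' := by
    intro h
    have := (Finset.mem_filter.1 h).2.1
    rw [hr] at this; omega
  have hlS' : l ∉ S' := by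
    intro h
    have := (Finset.mem_filter.1 h).2.2
    rw [hl2] at this; omega
  have hrl : r ≠ l := by
    intro h
    rw [h] at hr
    exact hl1 hr
  have hsub : insert r (insert l S') ⊆ S := by
    intro p hp
    rcases Finset.mem_insert.1 hp with rfl | hp
    · exact hrS
    rcases Finset.mem_insert.1 hp with rfl | hp
    · exact hlS
    · exact (Finset.mem_filter.1 hp).1
  have hcard : (insert r (insert l S')).card = S'.card + 2 := by
    rw [Finset.card_insert_of_notMem (by
      intro h
      rcases Finset.mem_insert.1 h with h | h
      exacts [hrl h, hrS' h]),
      Finset.card_insert_of_notMem hlS']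
  have := Finset.card_le_card hsub
  omega

/-- Any tree decomposition of the n×n grid (n ≥ 2) has a bag of size ≥ n+1. -/
lemma grid_td_lower (hn : 2 ≤ n) {b : ℕ} (htd : TreewidthLE (gridGraph n) b) :
    n ≤ b := by
  classical
  obtain ⟨td, hbags⟩ := htd
  set L : List (Set (Fin n × Fin n)) :=
    (((List.finRange n).product (List.finRange n)).filter
      (fun q => decide (q.1.val ≤ n - 2 ∧ q.2.val ≤ n - 2))).map (fun q => cross q.1 q.2)
      ++ [lastRow (n := n), lastCol (n := n)] with hLdef
  have hcrossmem : ∀ i j : Fin n, i.val ≤ n - 2 → j.val ≤ n - 2 → cross i j ∈ L := by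
    intro i j hi hj
    rw [hLdef]
    refine List.mem_append_left _ (List.mem_map.2 ⟨(i, j), ?_, rfl⟩)
    refine List.mem_filter.2 ⟨?_, by simpa using ⟨hi, hj⟩⟩
    exact List.mem_product.2 ⟨List.mem_finRange _, List.mem_finRange _⟩
  have hrowmem : lastRow (n := n) ∈ L := by rw [hLdef]; simp
  have hcolmem : lastCol (n := n) ∈ L := by rw [hLdef]; simp
  have hmemchar : ∀ B ∈ L, (∃ i j : Fin n, i.val ≤ n - 2 ∧ j.val ≤ n - 2 ∧ B = cross i j)
      ∨ B = lastRow (n := n) ∨ B = lastCol (n := n) := by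
    intro B hB
    rw [hLdef] at hB
    rcases List.mem_append.1 hB with hB | hB
    · obtain ⟨q, hq, rfl⟩ := List.mem_map.1 hB
      have := List.mem_filter.1 hq
      have h2 := of_decide_eq_true this.2
      exact Or.inl ⟨q.1, q.2, h2.1, h2.2, rfl⟩
    · rcases List.mem_cons.1 hB with rfl | hB2
      · exact Or.inr (Or.inl rfl)
      · rcases List.mem_cons.1 hB2 with rfl | hB3
        · exact Or.inr (Or.inr rfl)
        · exact absurd hB3 List.not_mem_nil
  -- touching structure
  have htouchpair : ∀ B ∈ L, ∀ B' ∈ L,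
      (∃ u, u ∈ B ∧ u ∈ B') ∨ (∃ u ∈ B, ∃ v ∈ B', (gridGraph n).Adj u v) := by
    have fl : Fin n := ⟨n - 1, by omega⟩
    intro B hB B' hB'
    rcases hmemchar B hB with ⟨i, j, hi, hj, rfl⟩ | rfl | rfl <;>
      rcases hmemchar B' hB' with ⟨i', j', hi', hj', rfl⟩ | rfl | rfl
    · exact Or.inl ⟨(i, j'), ⟨Or.inl rfl, hi, hj'⟩, ⟨Or.inr rfl, hi, hj'⟩⟩
    · -- cross vs lastRow
      refine Or.inr ⟨(⟨n - 2, by omega⟩, j), ⟨Or.inr rfl, by simp, hj⟩,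
        (⟨n - 1, by omega⟩, j), by simp [lastRow], grid_adj_row (by simp; omega)⟩
    · -- cross vs lastCol
      refine Or.inr ⟨(i, ⟨n - 2, by omega⟩), ⟨Or.inl rfl, hi, by simp⟩,
        (i, ⟨n - 1, by omega⟩), ⟨rfl, by simp; omega⟩, grid_adj_col (by simp; omega)⟩
    · -- lastRow vs cross
      refine Or.inr ⟨(⟨n - 1, by omega⟩, j'), by simp [lastRow],
        (⟨n - 2, by omega⟩, j'), ⟨Or.inr rfl, by simp, hj'⟩, (grid_adj_row (by simp; omega)).symm⟩
    · exact Or.inl ⟨(⟨n - 1, by omega⟩, ⟨0, by omega⟩), rfl, rfl⟩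
    · -- lastRow vs lastCol
      refine Or.inr ⟨(⟨n - 1, by omega⟩, ⟨n - 1, by omega⟩), rfl,
        (⟨n - 2, by omega⟩, ⟨n - 1, by omega⟩), ⟨rfl, by simp; omega⟩,
        (grid_adj_row (by simp; omega)).symm⟩
    · -- lastCol vs cross
      refine Or.inr ⟨(i', ⟨n - 1, by omega⟩), ⟨rfl, by simp; omega⟩,
        (i', ⟨n - 2, by omega⟩), ⟨Or.inl rfl, hi', by simp⟩, (grid_adj_col (by simp; omega)).symm⟩
    · -- lastCol vs lastRow
      refine Or.inr ⟨(⟨n - 2, by omega⟩, ⟨n - 1, by omega⟩), ⟨rfl, by simp; omega⟩,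
        (⟨n - 1, by omega⟩, ⟨n - 1, by omega⟩), rfl, grid_adj_row (by simp; omega)⟩
    · exact Or.inl ⟨(⟨0, by omega⟩, ⟨n - 1, by omega⟩), ⟨rfl, by simp; omega⟩,
        ⟨rfl, by simp; omega⟩⟩
  have hconn : ∀ B ∈ L, ((gridGraph n).induce B).Connected := by
    intro B hB
    rcases hmemchar B hB with ⟨i, j, hi, hj, rfl⟩ | rfl | rfl
    · exact cross_connected hn hi hj
    · exact lastRow_connected hn
    · exact lastCol_connected hn
  obtain ⟨t, ht⟩ := bramble_hit td L (by rw [hLdef]; simp) hconn htouchpair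
  have hcard := grid_hit_card hn (td.bag t)
    (fun i j hi hj => by
      obtain ⟨v, hv, hvb⟩ := ht _ (hcrossmem i j hi hj); exact ⟨v, hvb, hv⟩)
    (by obtain ⟨v, hv, hvb⟩ := ht _ hrowmem; exact ⟨v, hvb, hv⟩)
    (by obtain ⟨v, hv, hvb⟩ := ht _ hcolmem; exact ⟨v, hvb, hv⟩)
  have := hbags t
  omega

end GridBound
section Pullback
variable {α V : Type} [Fintype α] {H : SimpleGraph α} {G : SimpleGraph V}

lemma reachIn_univ_of_walk {ι : Type} {T : SimpleGraph ι} {i j : ι} (p : T.Walk i j) :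
    ReachIn T Set.univ i j := by
  induction p with
  | nil => exact .refl trivial
  | cons h _ ih => exact .head h trivial ih

lemma tw_le_of_minor (hminor : IsMinorOf H G) {w : ℕ} (hG : TreewidthLE G w) :
    TreewidthLE H w := by
  classical
  obtain ⟨φ, hconn, hdisj, hadj⟩ := hminor
  obtain ⟨td, hbags⟩ := hG
  have hne : ∀ a, (φ a).Nonempty := by
    intro a
    obtain ⟨⟨x, hx⟩⟩ := (hconn a).nonempty
    exact ⟨x, hx⟩
  refine ⟨⟨td.ι, td.T, td.isTree,
    fun i => Finset.univ.filter (fun a => ∃ x ∈ φ a, x ∈ td.bag i),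
    ?_, ?_, ?_⟩, ?_⟩
  · intro a
    obtain ⟨x, hx⟩ := hne a
    obtain ⟨i, hi⟩ := td.bag_cover x
    exact ⟨i, Finset.mem_filter.2 ⟨Finset.mem_univ _, x, hx, hi⟩⟩
  · intro a b hab
    obtain ⟨x, hx, y, hy, hxy⟩ := hadj a b hab
    obtain ⟨i, hxi, hyi⟩ := td.bag_edge x y hxy
    exact ⟨i, Finset.mem_filter.2 ⟨Finset.mem_univ _, x, hx, hxi⟩,
      Finset.mem_filter.2 ⟨Finset.mem_univ _, y, hy, hyi⟩⟩
  · intro a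
    have hset : {i | a ∈ Finset.univ.filter (fun a => ∃ x ∈ φ a, x ∈ td.bag i)}
        = nodes td (φ a) := by
      ext i
      simp only [Set.mem_setOf_eq, Finset.mem_filter, Finset.mem_univ, true_and]
      rfl
    rw [hset]
    obtain ⟨x, hx⟩ := hne a
    obtain ⟨i, hi⟩ := td.bag_cover x
    exact connected_induce_of_reachIn ⟨i, x, hx, hi⟩ (nodes_connected td (hconn a))
  · intro i
    refine le_trans (Finset.card_le_card_of_injOn
      (fun a => if h : ∃ x ∈ φ a, x ∈ td.bag i then h.choose else (hne a).choose)
      ?_ ?_) (hbags i)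
    · intro a ha
      obtain ⟨-, h⟩ := Finset.mem_filter.1 ha
      simp only [dif_pos h]
      exact h.choose_spec.2
    · intro a ha b hb hfab
      obtain ⟨-, hA⟩ := Finset.mem_filter.1 ha
      obtain ⟨-, hB⟩ := Finset.mem_filter.1 hb
      simp only [dif_pos hA, dif_pos hB] at hfab
      by_contra hne'
      exact Set.disjoint_left.1 (hdisj a b hne') hA.choose_spec.1
        (hfab ▸ hB.choose_spec.1)

end Pullback

section AddW
variable {V : Type} {G : SimpleGraph V}

lemma tw_le_add (W : Finset V) {w : ℕ}
    (h : TreewidthLE (G.induce ((↑W : Set V)ᶜ)) w) :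
    TreewidthLE G (w + W.card) := by
  classical
  obtain ⟨td, hbags⟩ := h
  have hι : Nonempty td.ι := td.isTree.isConnected.nonempty
  have hbag' : ∀ (i : td.ι) (v : V), v ∈ (td.bag i).map
      ⟨Subtype.val, Subtype.val_injective⟩ ∪ W ↔ ((∃ hv : v ∈ ((↑W : Set V)ᶜ),
        (⟨v, hv⟩ : ((↑W : Set V)ᶜ : Set V)) ∈ td.bag i) ∨ v ∈ W) := by
    intro i v
    simp only [Finset.mem_union, Finset.mem_map, Function.Embedding.coeFn_mk]
    constructor
    · rintro (⟨x, hx, rfl⟩ | hv)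
      · exact Or.inl ⟨x.2, by simpa using hx⟩
      · exact Or.inr hv
    · rintro (⟨hv, hx⟩ | hv)
      · exact Or.inl ⟨⟨v, hv⟩, hx, rfl⟩
      · exact Or.inr hv
  refine ⟨⟨td.ι, td.T, td.isTree,
    fun i => (td.bag i).map ⟨Subtype.val, Subtype.val_injective⟩ ∪ W,
    ?_, ?_, ?_⟩, ?_⟩
  · intro v
    by_cases hv : v ∈ W
    · exact ⟨hι.some, (hbag' _ _).2 (Or.inr hv)⟩
    · obtain ⟨i, hi⟩ := td.bag_cover ⟨v, hv⟩
      exact ⟨i, (hbag' _ _).2 (Or.inl ⟨hv, hi⟩)⟩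
  · intro u v huv
    by_cases hu : u ∈ W
    · by_cases hv : v ∈ W
      · exact ⟨hι.some, (hbag' _ _).2 (Or.inr hu), (hbag' _ _).2 (Or.inr hv)⟩
      · obtain ⟨i, hi⟩ := td.bag_cover ⟨v, hv⟩
        exact ⟨i, (hbag' _ _).2 (Or.inr hu), (hbag' _ _).2 (Or.inl ⟨hv, hi⟩)⟩
    · by_cases hv : v ∈ W
      · obtain ⟨i, hi⟩ := td.bag_cover ⟨u, hu⟩
        exact ⟨i, (hbag' _ _).2 (Or.inl ⟨hu, hi⟩), (hbag' _ _).2 (Or.inr hv)⟩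
      · obtain ⟨i, hi, hi'⟩ := td.bag_edge (⟨u, hu⟩ : ((↑W : Set V)ᶜ : Set V)) ⟨v, hv⟩
          (by simpa using huv)
        exact ⟨i, (hbag' _ _).2 (Or.inl ⟨hu, hi⟩), (hbag' _ _).2 (Or.inl ⟨hv, hi'⟩)⟩
  · intro v
    by_cases hv : v ∈ W
    · have hset : {i | v ∈ (td.bag i).map ⟨Subtype.val, Subtype.val_injective⟩ ∪ W}
          = Set.univ := by
        ext i; simp only [Set.mem_setOf_eq, Set.mem_univ, iff_true]
        exact (hbag' _ _).2 (Or.inr hv)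
      rw [hset]
      refine connected_induce_of_reachIn ⟨hι.some, trivial⟩ (fun i _ j _ => ?_)
      obtain ⟨p⟩ := td.isTree.isConnected.preconnected i j
      exact reachIn_univ_of_walk p
    · have hset : {i | v ∈ (td.bag i).map ⟨Subtype.val, Subtype.val_injective⟩ ∪ W}
          = {i | (⟨v, hv⟩ : ((↑W : Set V)ᶜ : Set V)) ∈ td.bag i} := by
        ext i
        simp only [Set.mem_setOf_eq]
        rw [hbag']
        constructor
        · rintro (⟨hv', hx⟩ | hv')
          · exact hx
          · exact absurd hv' hv
        · exact fun hx => Or.inl ⟨hv, hx⟩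
      rw [hset]
      exact td.bag_coherent _
  · intro i
    refine le_trans (Finset.card_union_le _ _) ?_
    rw [Finset.card_map]
    have := hbags i
    omega

/-- Every finite graph has some tree decomposition. -/
lemma tw_exists [Finite V] (G : SimpleGraph V) : ∃ w, TreewidthLE G w := by
  classical
  have : Fintype V := Fintype.ofFinite V
  have hconn : (⊥ : SimpleGraph PUnit).Connected := by
    refine ⟨fun a b => ?_⟩
    cases a; cases b; exact SimpleGraph.Reachable.refl _
  have hacyc : (⊥ : SimpleGraph PUnit).IsAcyclic := by
    intro v p hp
    cases p with
    | nil => exact hp.ne_nil rfl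
    | cons h _ => exact h.elim
  refine ⟨Fintype.card V, ⟨⟨PUnit, ⊥, ⟨hconn, hacyc⟩, fun _ => Finset.univ,
    fun v => ⟨⟨⟩, by simp⟩, fun u v _ => ⟨⟨⟩, by simp, by simp⟩, fun v => ?_⟩,
    fun i => by simpa using Nat.le_succ _⟩⟩
  refine connected_induce_of_reachIn ⟨⟨⟩, by simp⟩ (fun a ha b hb => ?_)
  cases a; cases b; exact .refl ha

lemma treewidthLE_mono {w w' : ℕ} (h : TreewidthLE G w) (hww : w ≤ w') :
    TreewidthLE G w' := by
  obtain ⟨td, htd⟩ := h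
  exact ⟨td, fun i => le_trans (htd i) (by omega)⟩

lemma treewidthLE_treewidth [Finite V] (G : SimpleGraph V) :
    TreewidthLE G (treewidth G) :=
  Nat.sInf_mem (tw_exists G)

lemma treewidth_le_of {w : ℕ} (h : TreewidthLE G w) : treewidth G ≤ w :=
  Nat.sInf_le h

end AddW
section Final

lemma block_inj {n a a' r r' : ℕ} (hr : r < n) (hr' : r' < n)
    (h : a * n + r = a' * n + r') : a = a' ∧ r = r' := by
  have key : a = a' := by
    rcases Nat.lt_trichotomy a a' with hlt | heq | hgt
    · have h1 : (a + 1) * n ≤ a' * n := Nat.mul_le_mul_right n hlt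
      rw [Nat.succ_mul] at h1
      omega
    · exact heq
    · have h1 : (a' + 1) * n ≤ a * n := Nat.mul_le_mul_right n hgt
      rw [Nat.succ_mul] at h1
      omega
  subst key
  omega

lemma emb_bound {q w1 m s r : ℕ} (h : q * w1 ≤ m) (hs : s < q) (hr : r < w1) :
    s * w1 + r < m := by
  have h1 : (s + 1) * w1 ≤ q * w1 := Nat.mul_le_mul_right w1 hs
  rw [Nat.succ_mul] at h1
  omega

lemma grid_adj_iff {n : ℕ} {p q : Fin n × Fin n} : (gridGraph n).Adj p q ↔
    ((p.1.val + 1 = q.1.val ∨ q.1.val + 1 = p.1.val) ∧ p.2 = q.2) ∨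
    ((p.2.val + 1 = q.2.val ∨ q.2.val + 1 = p.2.val) ∧ p.1 = q.1) := by
  rw [gridGraph, SimpleGraph.boxProd_adj]
  simp [SimpleGraph.pathGraph_adj]

lemma reachIn_induce_transfer {V : Type} {G : SimpleGraph V} {S C : Set V} (hCS : C ⊆ S) :
    ∀ {u v : V}, (h : ReachIn G C u v) →
    ReachIn (G.induce S) {y : ↥S | (y : V) ∈ C} ⟨u, hCS h.mem_left⟩ ⟨v, hCS h.mem_right⟩ := by
  intro u v h
  induction h with
  | refl hu => exact .refl hu
  | tail h ha hw ih => exact .tail ih (by simpa using ha) hw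

lemma connected_induce_induce {V : Type} {G : SimpleGraph V} {S C : Set V} (hCS : C ⊆ S)
    (h : (G.induce C).Connected) :
    ((G.induce S).induce {y : ↥S | (y : V) ∈ C}).Connected := by
  obtain ⟨⟨x, hx⟩⟩ := h.nonempty
  refine connected_induce_of_reachIn ⟨⟨x, hCS hx⟩, hx⟩ (fun a ha b hb => ?_)
  exact reachIn_induce_transfer hCS (reachIn_of_connected h ha hb)

lemma minor_card_le {α β : Type} [Finite β] {H : SimpleGraph α} {G : SimpleGraph β}
    (h : IsMinorOf H G) : Nat.card α ≤ Nat.card β := by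
  obtain ⟨φ, hconn, hdisj, -⟩ := h
  have hne : ∀ a, ∃ x, x ∈ φ a := by
    intro a
    obtain ⟨⟨x, hx⟩⟩ := (hconn a).nonempty
    exact ⟨x, hx⟩
  choose f hf using hne
  have hinj : Function.Injective f := by
    intro a b hab
    by_contra hne'
    exact Set.disjoint_left.1 (hdisj a b hne') (hf a) (hab ▸ hf b)
  exact Nat.card_le_card_of_injective f hinj

end Final
/-- if deleting k vertices from a planar graph `G` (planarity being used
through the grid-minor property with constant `c`) leaves treewidth ≤ w, then
the treewidth of `G` is at most `3·c·w·√k`. -/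
theorem stmt4 {V : Type} [Finite V] (G : SimpleGraph V) (c k w : ℕ)
    (hk : 1 ≤ k) (hw : 1 ≤ w)
    (hplanarGrid : ∀ m : ℕ, c * m ≤ treewidth G → IsMinorOf (gridGraph m) G)
    (W : Finset V) (hWcard : W.card = k)
    (hdel : treewidth (G.induce ((↑W : Set V)ᶜ)) ≤ w) :
    (treewidth G : ℝ) ≤ 3 * (c : ℝ) * (w : ℝ) * Real.sqrt (k : ℝ) := by
  classical
  by_contra hcon
  push_neg at hcon
  have hks : (1:ℝ) ≤ Real.sqrt k := Real.one_le_sqrt.2 (by exact_mod_cast hk)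
  have hsq : Real.sqrt k * Real.sqrt k = (k:ℝ) := Real.mul_self_sqrt (by positivity)
  have hw1 : (1:ℝ) ≤ (w:ℝ) := by exact_mod_cast hw
  -- c ≥ 1
  have hc : 1 ≤ c := by
    rcases Nat.eq_zero_or_pos c with rfl | hc
    · exfalso
      have hminor := hplanarGrid (Nat.card V + 1) (by simp)
      have hcard := minor_card_le hminor
      have hcards : Nat.card (Fin (Nat.card V + 1) × Fin (Nat.card V + 1))
          = (Nat.card V + 1) * (Nat.card V + 1) := by simp
      rw [hcards] at hcard
      have h1 : Nat.card V + 1 ≤ (Nat.card V + 1) * (Nat.card V + 1) :=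
        Nat.le_mul_of_pos_right _ (by omega)
      omega
    · exact hc
  have hc1 : (1:ℝ) ≤ (c:ℝ) := by exact_mod_cast hc
  -- treewidth G ≤ w + k
  have hA : treewidth G ≤ w + k := by
    have h1 : TreewidthLE (G.induce ((↑W : Set V)ᶜ)) w :=
      treewidthLE_mono (treewidthLE_treewidth _) hdel
    have h2 := tw_le_add (G := G) W h1
    rw [hWcard] at h2
    exact treewidth_le_of h2
  by_cases hbig : 2 ≤ w ∨ 4 ≤ k
  · -- main case
    have hkey : ((w:ℝ) + 1) ≤ (2 * w - 1) * Real.sqrt k := by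
      rcases hbig with hw2 | hk4
      · have hw2' : (2:ℝ) ≤ (w:ℝ) := by exact_mod_cast hw2
        nlinarith
      · have hk4' : (2:ℝ) ≤ Real.sqrt k := by
          have h4 : Real.sqrt 4 ≤ Real.sqrt k := Real.sqrt_le_sqrt (by exact_mod_cast hk4)
          have : Real.sqrt 4 = 2 := by
            rw [show (4:ℝ) = 2^2 by norm_num, Real.sqrt_sq (by norm_num)]
          linarith
        nlinarith
    set tw := treewidth G with htw
    set m := tw / c with hmdef
    have hcm : c * m ≤ tw := by
      rw [hmdef, mul_comm]
      exact Nat.div_mul_le_self tw c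
    have hminor := hplanarGrid m hcm
    have htwlt : tw < c * (m + 1) := by
      have h1 : c * m + tw % c = tw := by rw [hmdef]; exact Nat.div_add_mod tw c
      have h2 := Nat.mod_lt tw (show 0 < c by omega)
      have h3 : c * (m + 1) = c * m + c := by ring
      omega
    have hm1 : 3 * (w:ℝ) * Real.sqrt k < (m:ℝ) + 1 := by
      have hcpos : (0:ℝ) < (c:ℝ) := by linarith
      have h3 : (c:ℝ) * (3 * w * Real.sqrt k) < (c:ℝ) * ((m:ℝ) + 1) := by
        have hlt : (tw:ℝ) < (c:ℝ) * ((m:ℝ) + 1) := by exact_mod_cast htwlt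
        calc (c:ℝ) * (3 * w * Real.sqrt k) = 3 * (c:ℝ) * w * Real.sqrt k := by ring
          _ < (tw:ℝ) := hcon
          _ < (c:ℝ) * ((m:ℝ) + 1) := hlt
      exact (mul_lt_mul_iff_right₀ hcpos).1 h3
    set q := m / (w + 1) with hqdef
    have hqm : q * (w + 1) ≤ m := Nat.div_mul_le_self m (w + 1)
    have hmq : m < (q + 1) * (w + 1) := by
      have h1 : (w + 1) * q + m % (w + 1) = m := by rw [hqdef]; exact Nat.div_add_mod m (w + 1)
      have h2 := Nat.mod_lt m (show 0 < w + 1 by omega)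
      have h3 : (q + 1) * (w + 1) = (w + 1) * q + (w + 1) := by ring
      omega
    have hq : Real.sqrt k < (q:ℝ) := by
      have hm2 : (m:ℝ) + 1 ≤ ((q:ℝ) + 1) * ((w:ℝ) + 1) := by
        have : (m:ℝ) + 1 ≤ ((q+1) * (w+1) : ℕ) := by exact_mod_cast hmq
        push_cast at this ⊢
        linarith
      have hw0 : (0:ℝ) < (w:ℝ) + 1 := by linarith
      have hstep : ((w:ℝ) + 1) * (Real.sqrt k + 1) < ((w:ℝ) + 1) * ((q:ℝ) + 1) := by
        calc ((w:ℝ) + 1) * (Real.sqrt k + 1)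
            = ((w:ℝ) + 1) * Real.sqrt k + ((w:ℝ) + 1) := by ring
          _ ≤ ((w:ℝ) + 1) * Real.sqrt k + (2 * w - 1) * Real.sqrt k := by linarith
          _ = 3 * (w:ℝ) * Real.sqrt k := by ring
          _ < (m:ℝ) + 1 := hm1
          _ ≤ ((q:ℝ) + 1) * ((w:ℝ) + 1) := hm2
          _ = ((w:ℝ) + 1) * ((q:ℝ) + 1) := by ring
      have := (mul_lt_mul_iff_right₀ hw0).1 hstep
      linarith
    have hkq : k + 1 ≤ q * q := by
      have hr : (k:ℝ) < (q:ℝ) * (q:ℝ) := by nlinarith [Real.sqrt_nonneg (k:ℝ)]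
      have : k < q * q := by exact_mod_cast hr
      omega
    obtain ⟨φ, hconn, hdisj, hadj⟩ := hminor
    -- the subgrid embeddings
    set f : Fin q × Fin q → Fin (w + 1) × Fin (w + 1) → Fin m × Fin m := fun st p =>
      (⟨st.1.val * (w + 1) + p.1.val, emb_bound hqm st.1.isLt p.1.isLt⟩,
       ⟨st.2.val * (w + 1) + p.2.val, emb_bound hqm st.2.isLt p.2.isLt⟩) with hfdef
    have hf1 : ∀ st p, ((f st p).1 : ℕ) = st.1.val * (w + 1) + p.1.val := fun _ _ => rfl
    have hf2 : ∀ st p, ((f st p).2 : ℕ) = st.2.val * (w + 1) + p.2.val := fun _ _ => rfl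
    have hfinj : ∀ s t p p', f s p = f t p' → s = t ∧ p = p' := by
      intro s t p p' hEq
      rw [Prod.ext_iff] at hEq
      have h1 : ((f s p).1 : ℕ) = ((f t p').1 : ℕ) := by rw [hEq.1]
      have h2 : ((f s p).2 : ℕ) = ((f t p').2 : ℕ) := by rw [hEq.2]
      rw [hf1, hf1] at h1
      rw [hf2, hf2] at h2
      obtain ⟨ha1, hb1⟩ := block_inj p.1.isLt p'.1.isLt h1
      obtain ⟨ha2, hb2⟩ := block_inj p.2.isLt p'.2.isLt h2
      exact ⟨Prod.ext (Fin.ext ha1) (Fin.ext ha2), Prod.ext (Fin.ext hb1) (Fin.ext hb2)⟩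
    -- some subgrid avoids W
    have hgood : ∃ st : Fin q × Fin q, ∀ p, ∀ x ∈ φ (f st p), x ∉ W := by
      by_contra hbad
      push_neg at hbad
      choose pf xf hx1 hx2 using hbad
      have hinj : Function.Injective (fun st => (⟨xf st, hx2 st⟩ : {x // x ∈ W})) := by
        intro s t hst
        simp only [Subtype.mk.injEq] at hst
        by_contra hne'
        have hcells : f s (pf s) ≠ f t (pf t) := by
          intro hEq
          exact hne' (hfinj _ _ _ _ hEq).1
        exact Set.disjoint_left.1 (hdisj _ _ hcells) (hx1 s) (hst ▸ hx1 t)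
      have hcount := Fintype.card_le_of_injective _ hinj
      simp only [Fintype.card_prod, Fintype.card_fin, Fintype.card_coe, hWcard] at hcount
      omega
    obtain ⟨st0, hst0⟩ := hgood
    have hsub : ∀ p, φ (f st0 p) ⊆ ((↑W : Set V)ᶜ) := by
      intro p x hx
      exact hst0 p x hx
    -- the (w+1)-grid is a minor of G - W
    have hminor' : IsMinorOf (gridGraph (w + 1)) (G.induce ((↑W : Set V)ᶜ)) := by
      refine ⟨fun p => {y | (y : V) ∈ φ (f st0 p)}, ?_, ?_, ?_⟩
      · intro p
        exact connected_induce_induce (hsub p) (hconn _)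
      · intro p p' hpp
        rw [Set.disjoint_left]
        rintro y hy hy'
        have hcell : f st0 p ≠ f st0 p' := by
          intro hEq
          exact hpp (hfinj _ _ _ _ hEq).2
        exact Set.disjoint_left.1 (hdisj _ _ hcell) hy hy'
      · intro p p' hpp
        have hadjm : (gridGraph m).Adj (f st0 p) (f st0 p') := by
          rw [grid_adj_iff] at hpp ⊢
          rcases hpp with ⟨hv, he⟩ | ⟨hv, he⟩
          · refine Or.inl ⟨?_, ?_⟩
            · rw [hf1, hf1]; omega
            · apply Fin.ext; rw [hf2, hf2, he]
          · refine Or.inr ⟨?_, ?_⟩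
            · rw [hf2, hf2]; omega
            · apply Fin.ext; rw [hf1, hf1, he]
        obtain ⟨x, hx, y, hy, hxy⟩ := hadj _ _ hadjm
        exact ⟨⟨x, hsub p hx⟩, hx, ⟨y, hsub p' hy⟩, hy, by simpa using hxy⟩
    have hfin : TreewidthLE (gridGraph (w + 1)) w :=
      tw_le_of_minor hminor' (treewidthLE_mono (treewidthLE_treewidth _) hdel)
    have := grid_td_lower (by omega) hfin
    omega
  · -- small case : w = 1 and k ≤ 3
    push_neg at hbig
    have hw1' : w = 1 := by omega
    have hk3 : k ≤ 3 := by omega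
    have hk2 : Real.sqrt k ≤ 2 := by
      have h4 : Real.sqrt k ≤ Real.sqrt 4 := Real.sqrt_le_sqrt (by exact_mod_cast (by omega : k ≤ 4))
      have : Real.sqrt 4 = 2 := by
        rw [show (4:ℝ) = 2^2 by norm_num, Real.sqrt_sq (by norm_num)]
      linarith
    have hAr : (treewidth G : ℝ) ≤ (w:ℝ) + (k:ℝ) := by exact_mod_cast hA
    push_cast at hAr
    -- k + 2 ≤ 3√k  (since 1 ≤ √k ≤ 2 : 3s ≥ s² + 2 = k + 2)
    have h3s : (k:ℝ) + 2 ≤ 3 * Real.sqrt k := by nlinarith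
    rw [hw1'] at hAr
    push_cast at hAr
    have : 3 * (c:ℝ) * (w:ℝ) * Real.sqrt k ≥ 3 * Real.sqrt k := by
      have hs0 : (0:ℝ) ≤ Real.sqrt k := Real.sqrt_nonneg _
      rw [hw1']
      push_cast
      nlinarith
    linarith
end

section
/- Let H be an edge-minimal feasible solution to a directed Steiner network instance (G, T, D): H is a subgraph of G containing, for every demand (s,t) ∈ E(D), a directed path from s to t, and no proper subgraph of H is feasible. Let Vi be the vertex set of a strongly connected component of H with |Vi| ≥ 2 that contains no terminal. Then the number of edges of H with exactly one endpoint in Vi is at least 3. -/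
open Relation

/-- Any walk from `b` to `c` can be rerouted to avoid using edges starting at `c`
(truncate at the first arrival at `c`). -/
private lemma avoid_start {V : Type} {R : V → V → Prop} {b c : V}
    (h : ReflTransGen R b c) :
    ReflTransGen (fun x y => R x y ∧ x ≠ c) b c := by
  induction h using ReflTransGen.head_induction_on with
  | refl => exact .refl
  | head hR hRT ih =>
    rename_i a a'
    by_cases hac : a = c
    · subst hac; exact .refl
    · exact .head ⟨hR, hac⟩ ih

/-- in an edge-minimal feasible Steiner-network solution H, a strongly
connected component with at least two vertices and no terminal has degree at least 3. -/
theorem stmt8 {V : Type} [Fintype V] (G H Dem : V → V → Prop) (T : Set V)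
    (hsub : ∀ u v, H u v → G u v)
    (hDemT : ∀ s t, Dem s t → s ∈ T ∧ t ∈ T)
    (hfeas : ∀ s t, Dem s t → Relation.ReflTransGen H s t)
    (hmin : ∀ u v, H u v → ∃ s t, Dem s t ∧
      ¬ Relation.ReflTransGen (fun x y => H x y ∧ ¬ (x = u ∧ y = v)) s t)
    (Vi : Set V)
    (hconn : ∀ x ∈ Vi, ∀ y ∈ Vi, Relation.ReflTransGen H x y)
    (hmax : ∀ x ∈ Vi, ∀ y, Relation.ReflTransGen H x y →
      Relation.ReflTransGen H y x → y ∈ Vi)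
    (hbig : ∃ x ∈ Vi, ∃ y ∈ Vi, x ≠ y)
    (hnoterm : ∀ t ∈ T, t ∉ Vi) :
    3 ≤ Set.ncard {e : V × V | H e.1 e.2 ∧
      ((e.1 ∈ Vi ∧ e.2 ∉ Vi) ∨ (e.1 ∉ Vi ∧ e.2 ∈ Vi))} := by
  classical
  set Bin : Set (V × V) := {e | H e.1 e.2 ∧ e.1 ∉ Vi ∧ e.2 ∈ Vi} with hBin_def
  set Bout : Set (V × V) := {e | H e.1 e.2 ∧ e.1 ∈ Vi ∧ e.2 ∉ Vi} with hBout_def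
  -- walks between vertices of Vi can be taken inside Vi
  have hin : ∀ x ∈ Vi, ∀ y ∈ Vi,
      ReflTransGen (fun p q => H p q ∧ p ∈ Vi ∧ q ∈ Vi) x y := by
    intro x hx y hy
    have key : ∀ x, ReflTransGen H x y → x ∈ Vi →
        ReflTransGen (fun p q => H p q ∧ p ∈ Vi ∧ q ∈ Vi) x y := by
      intro x h
      induction h using ReflTransGen.head_induction_on with
      | refl => intro _; exact .refl
      | head hR hRT ih =>
        rename_i a c
        intro ha
        have hc : c ∈ Vi :=
          hmax a ha c (ReflTransGen.single hR) (hRT.trans (hconn y hy a ha))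
        exact .head ⟨hR, ha, hc⟩ (ih hc)
    exact key x (hconn x hx y hy) hx
  -- every vertex of Vi has an outgoing internal edge
  have hedge : ∀ c ∈ Vi, ∃ w, H c w ∧ w ∈ Vi := by
    intro c hc
    obtain ⟨x0, hx0, y0, hy0, hne⟩ := hbig
    obtain ⟨z, hz, hzc⟩ : ∃ z ∈ Vi, z ≠ c := by
      by_cases h : x0 = c
      · exact ⟨y0, hy0, fun hyc => hne (h.trans hyc.symm)⟩
      · exact ⟨x0, hx0, h⟩
    rcases (hin c hc z hz).cases_head with hcz | ⟨w, hw, _⟩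
    · exact absurd hcz.symm hzc
    · exact ⟨w, hw.1, hw.2.2⟩
  -- Bin is nonempty
  have hBin_ne : Bin.Nonempty := by
    obtain ⟨x0, hx0, -⟩ := hbig
    obtain ⟨w, huv, hwVi⟩ := hedge x0 hx0
    obtain ⟨s, t, hdem, hnr⟩ := hmin x0 w huv
    obtain ⟨hsT, htT⟩ := hDemT s t hdem
    have hs : s ∉ Vi := hnoterm s hsT
    have ht : t ∉ Vi := hnoterm t htT
    by_contra hne
    rw [Set.not_nonempty_iff_eq_empty] at hne
    apply hnr
    have key : ∀ z, ReflTransGen H s z → z ∉ Vi ∧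
        ReflTransGen (fun x y => H x y ∧ ¬ (x = x0 ∧ y = w)) s z := by
      intro z h
      induction h with
      | refl => exact ⟨hs, .refl⟩
      | tail h1 h2 ih =>
        rename_i p q
        have hq : q ∉ Vi := by
          intro hq
          have : (p, q) ∈ Bin := ⟨h2, ih.1, hq⟩
          rw [hne] at this; exact this
        exact ⟨hq, ih.2.tail ⟨h2, fun hpq => ih.1 (hpq.1 ▸ hx0)⟩⟩
    exact (key t (hfeas s t hdem)).2
  -- Bout is nonempty
  have hBout_ne : Bout.Nonempty := by
    obtain ⟨x0, hx0, -⟩ := hbig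
    obtain ⟨w, huv, hwVi⟩ := hedge x0 hx0
    obtain ⟨s, t, hdem, hnr⟩ := hmin x0 w huv
    obtain ⟨hsT, htT⟩ := hDemT s t hdem
    have hs : s ∉ Vi := hnoterm s hsT
    have ht : t ∉ Vi := hnoterm t htT
    by_contra hne
    rw [Set.not_nonempty_iff_eq_empty] at hne
    apply hnr
    have key : ∀ z, ReflTransGen H z t → z ∉ Vi ∧
        ReflTransGen (fun x y => H x y ∧ ¬ (x = x0 ∧ y = w)) z t := by
      intro z h
      induction h using ReflTransGen.head_induction_on with
      | refl => exact ⟨ht, .refl⟩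
      | head hR hRT ih =>
        rename_i a c
        have ha : a ∉ Vi := by
          intro ha
          have : (a, c) ∈ Bout := ⟨hR, ha, ih.1⟩
          rw [hne] at this; exact this
        exact ⟨ha, ih.2.head ⟨hR, fun hpq => ih.1 (hpq.2 ▸ hwVi)⟩⟩
    exact (key s (hfeas s t hdem)).2
  -- not both singletons
  have hnot11 : ¬ (Bin.ncard = 1 ∧ Bout.ncard = 1) := by
    rintro ⟨h1, h2⟩
    obtain ⟨⟨a, b⟩, hBin1⟩ := Set.ncard_eq_one.mp h1
    obtain ⟨⟨c, d⟩, hBout1⟩ := Set.ncard_eq_one.mp h2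
    have hab : H a b ∧ a ∉ Vi ∧ b ∈ Vi := by
      have : (a, b) ∈ Bin := by rw [hBin1]; rfl
      exact this
    have hcd : H c d ∧ c ∈ Vi ∧ d ∉ Vi := by
      have : (c, d) ∈ Bout := by rw [hBout1]; rfl
      exact this
    have huin : ∀ p q, H p q → p ∉ Vi → q ∈ Vi → p = a ∧ q = b := by
      intro p q hpq hp hq
      have : (p, q) ∈ Bin := ⟨hpq, hp, hq⟩
      rw [hBin1, Set.mem_singleton_iff, Prod.mk.injEq] at this
      exact this
    have huout : ∀ p q, H p q → p ∈ Vi → q ∉ Vi → p = c ∧ q = d := by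
      intro p q hpq hp hq
      have : (p, q) ∈ Bout := ⟨hpq, hp, hq⟩
      rw [hBout1, Set.mem_singleton_iff, Prod.mk.injEq] at this
      exact this
    obtain ⟨w, hcw, hwVi⟩ := hedge c hcd.2.1
    obtain ⟨s, t, hdem, hnr⟩ := hmin c w hcw
    obtain ⟨hsT, htT⟩ := hDemT s t hdem
    have hs : s ∉ Vi := hnoterm s hsT
    have ht : t ∉ Vi := hnoterm t htT
    apply hnr
    -- path from b to c inside Vi avoiding edges starting at c
    have hbc : ReflTransGen (fun x y => H x y ∧ ¬ (x = c ∧ y = w)) b c := by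
      have h0 := avoid_start (hin b hab.2.2 c hcd.2.1)
      refine ReflTransGen.mono ?_ b c h0
      rintro p q ⟨⟨hpq, -, -⟩, hpc⟩
      exact ⟨hpq, fun h => hpc h.1⟩
    have key : ∀ z, ReflTransGen H s z →
        ((z ∉ Vi → ReflTransGen (fun x y => H x y ∧ ¬ (x = c ∧ y = w)) s z) ∧
         (z ∈ Vi → ReflTransGen (fun x y => H x y ∧ ¬ (x = c ∧ y = w)) s b)) := by
      intro z h
      induction h with
      | refl => exact ⟨fun _ => .refl, fun hz => absurd hz hs⟩
      | tail h1 h2 ih =>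
        rename_i p q
        constructor
        · intro hq
          by_cases hp : p ∈ Vi
          · obtain ⟨hpc, -⟩ := huout p q h2 hp hq
            subst hpc
            exact ((ih.2 hp).trans hbc).tail ⟨h2, fun hh => hq (hh.2 ▸ hwVi)⟩
          · exact (ih.1 hp).tail ⟨h2, fun hh => hp (hh.1 ▸ hcd.2.1)⟩
        · intro hq
          by_cases hp : p ∈ Vi
          · exact ih.2 hp
          · obtain ⟨-, hqb⟩ := huin p q h2 hp hq
            subst hqb
            exact (ih.1 hp).tail ⟨h2, fun hh => hp (hh.1 ▸ hcd.2.1)⟩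
    exact (key t (hfeas s t hdem)).1 ht
  -- assemble cardinalities
  have hSeq : {e : V × V | H e.1 e.2 ∧
      ((e.1 ∈ Vi ∧ e.2 ∉ Vi) ∨ (e.1 ∉ Vi ∧ e.2 ∈ Vi))} = Bout ∪ Bin := by
    ext ⟨p, q⟩
    simp only [Set.mem_setOf_eq, Set.mem_union, hBin_def, hBout_def]
    tauto
  have hdisj : Disjoint Bout Bin := by
    rw [Set.disjoint_left]
    rintro ⟨p, q⟩ hpq hpq'
    exact hpq'.2.1 hpq.2.1
  rw [hSeq, Set.ncard_union_eq hdisj (Set.toFinite _) (Set.toFinite _)]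
  have h1 : 1 ≤ Bin.ncard := (Set.ncard_pos (Set.toFinite _)).mpr hBin_ne
  have h2 : 1 ≤ Bout.ncard := (Set.ncard_pos (Set.toFinite _)).mpr hBout_ne
  omega
end

section
/- Every bipartite graph containing a matching of size at least R'(t) contains either an induced matching of size t or an induced complete bipartite subgraph K_{t,t} (a t-induced-biclique), where R'(t) is a function of t only whose existence follows from Ramsey's theorem. -/
open Finset

private lemma ram_step (c : ℕ → ℕ → Fin 4) (S : Finset ℕ) (hS : S.Nonempty) :
    ∃ a ∈ S, ∃ d : Fin 4, ∃ T ⊆ S, (∀ b ∈ T, a < b ∧ c a b = d) ∧ S.card ≤ 4 * T.card + 1 := by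
  classical
  set a := S.min' hS with ha
  have hsum : (S.erase a).card = ∑ d : Fin 4, ((S.erase a).filter (fun b => c a b = d)).card :=
    Finset.card_eq_sum_card_fiberwise (fun x _ => Finset.mem_univ _)
  obtain ⟨d, -, hd⟩ := Finset.exists_max_image Finset.univ
    (fun d : Fin 4 => ((S.erase a).filter (fun b => c a b = d)).card) ⟨0, Finset.mem_univ 0⟩
  refine ⟨a, S.min'_mem hS, d, (S.erase a).filter (fun b => c a b = d),
    (Finset.filter_subset _ _).trans (Finset.erase_subset _ _), ?_, ?_⟩
  · intro b hb
    rw [Finset.mem_filter] at hb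
    have hne : b ≠ a := Finset.ne_of_mem_erase hb.1
    have hmem : b ∈ S := Finset.mem_of_mem_erase hb.1
    exact ⟨lt_of_le_of_ne (S.min'_le b hmem) (Ne.symm hne), hb.2⟩
  · have h1 : (S.erase a).card ≤ 4 * ((S.erase a).filter (fun b => c a b = d)).card := by
      rw [hsum]
      calc ∑ d' : Fin 4, ((S.erase a).filter (fun b => c a b = d')).card
          ≤ ∑ _d' : Fin 4, ((S.erase a).filter (fun b => c a b = d)).card :=
            Finset.sum_le_sum (fun i _ => hd i (Finset.mem_univ i))
        _ = 4 * ((S.erase a).filter (fun b => c a b = d)).card := by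
            simp [Finset.sum_const, Finset.card_univ]
    have h2 : (S.erase a).card = S.card - 1 := Finset.card_erase_of_mem (S.min'_mem hS)
    have h3 : 1 ≤ S.card := Finset.card_pos.mpr hS
    omega

private lemma ram_prehom (c : ℕ → ℕ → Fin 4) :
    ∀ (n : ℕ) (S : Finset ℕ), 4 ^ n ≤ S.card →
    ∃ (a : Fin n → ℕ) (d : Fin n → Fin 4), StrictMono a ∧ (∀ i, a i ∈ S) ∧
      ∀ i j, i < j → c (a i) (a j) = d i := by
  intro n
  induction n with
  | zero =>
    intro S _
    exact ⟨Fin.elim0, Fin.elim0, fun i => i.elim0, fun i => i.elim0, fun i => i.elim0⟩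
  | succ n ih =>
    intro S hcard
    have hS : S.Nonempty := Finset.card_pos.mp
      (lt_of_lt_of_le (pow_pos (by norm_num) _) hcard)
    obtain ⟨a0, ha0, d0, T, hTS, hT, hcard2⟩ := ram_step c S hS
    have hT4 : 4 ^ n ≤ T.card := by
      have hpow : 4 ^ (n + 1) = 4 * 4 ^ n := by ring
      omega
    obtain ⟨a, d, hmono, hmem, hcol⟩ := ih T hT4
    refine ⟨Fin.cases a0 a, Fin.cases d0 d, ?_, ?_, ?_⟩
    · intro i j hij
      induction i using Fin.cases with
      | zero =>
        induction j using Fin.cases with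
        | zero => exact absurd hij (lt_irrefl _)
        | succ j =>
          simp only [Fin.cases_zero, Fin.cases_succ]
          exact (hT _ (hmem j)).1
      | succ i =>
        induction j using Fin.cases with
        | zero => exact absurd hij (Fin.not_lt_zero _)
        | succ j =>
          simp only [Fin.cases_succ]
          exact hmono (Fin.succ_lt_succ_iff.mp hij)
    · intro i
      induction i using Fin.cases with
      | zero => simpa using ha0
      | succ i => simpa using hTS (hmem i)
    · intro i j hij
      induction i using Fin.cases with
      | zero =>
        induction j using Fin.cases with
        | zero => exact absurd hij (lt_irrefl _)
        | succ j =>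
          simp only [Fin.cases_zero, Fin.cases_succ]
          exact (hT _ (hmem j)).2
      | succ i =>
        induction j using Fin.cases with
        | zero => exact absurd hij (Fin.not_lt_zero _)
        | succ j =>
          simp only [Fin.cases_succ]
          exact hcol i j (Fin.succ_lt_succ_iff.mp hij)

private lemma ramsey4 (c : ℕ → ℕ → Fin 4) (m : ℕ) (S : Finset ℕ)
    (h : 4 ^ (4 * m) ≤ S.card) :
    ∃ (b : Fin m → ℕ) (k : Fin 4), StrictMono b ∧ (∀ i, b i ∈ S) ∧
      ∀ i j, i < j → c (b i) (b j) = k := by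
  classical
  obtain ⟨a, d, hmono, hmem, hcol⟩ := ram_prehom c (4 * m) S h
  have hsum : (Finset.univ : Finset (Fin (4 * m))).card
      = ∑ k : Fin 4, (Finset.univ.filter (fun i => d i = k)).card :=
    Finset.card_eq_sum_card_fiberwise (fun x _ => Finset.mem_univ _)
  have hex : ∃ k : Fin 4, m ≤ (Finset.univ.filter (fun i => d i = k)).card := by
    by_contra hcon
    push_neg at hcon
    have hle : ∑ k : Fin 4, (Finset.univ.filter (fun i => d i = k)).card
        ≤ ∑ _k : Fin 4, (m - 1) := Finset.sum_le_sum (fun k _ => by have := hcon k; omega)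
    have hm : 0 < m := by
      rcases Nat.eq_zero_or_pos m with h0 | h0
      · exact absurd (hcon 0) (by simp [h0])
      · exact h0
    simp only [Finset.sum_const, Finset.card_univ, Fintype.card_fin, smul_eq_mul] at hle
    rw [Finset.card_univ, Fintype.card_fin] at hsum
    omega
  obtain ⟨k, hk⟩ := hex
  obtain ⟨I, hIsub, hIcard⟩ := Finset.exists_subset_card_eq hk
  have e := I.orderIsoOfFin hIcard
  refine ⟨fun i => a (e i), k, ?_, fun i => hmem _, ?_⟩
  · intro i j hij
    exact hmono (by exact_mod_cast e.strictMono hij)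
  · intro i j hij
    have hiI : (e i : Fin (4 * m)) ∈ I := (e i).2
    have : d (e i) = k := by
      have := hIsub hiI
      simpa using (Finset.mem_filter.mp this).2
    rw [← this]
    exact hcol _ _ (by exact_mod_cast e.strictMono hij)


/-- there is a bound R'(t) such that every bipartite graph with a matching
of size R'(t) contains an induced matching of size t or an induced biclique K_{t,t}. -/
theorem stmt16 (t : ℕ) :
    ∃ R : ℕ, ∀ (X Y : Type) (E : X → Y → Prop)
      (x : Fin R → X) (y : Fin R → Y),
      Function.Injective x → Function.Injective y → (∀ i, E (x i) (y i)) →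
      (∃ (a : Fin t → X) (b : Fin t → Y), Function.Injective a ∧ Function.Injective b ∧
        (∀ i, E (a i) (b i)) ∧ (∀ i j, i ≠ j → ¬ E (a i) (b j))) ∨
      (∃ (a : Fin t → X) (b : Fin t → Y), Function.Injective a ∧ Function.Injective b ∧
        ∀ i j, E (a i) (b j)) := by
  classical
  refine ⟨4 ^ (4 * (t + t)), ?_⟩
  intro X Y E x y hx hy hE
  set c : ℕ → ℕ → Fin 4 := fun i j =>
    if h : i < 4 ^ (4 * (t + t)) ∧ j < 4 ^ (4 * (t + t)) then
      (if E (x ⟨i, h.1⟩) (y ⟨j, h.2⟩) then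
        (if E (x ⟨j, h.2⟩) (y ⟨i, h.1⟩) then 0 else 1)
      else
        (if E (x ⟨j, h.2⟩) (y ⟨i, h.1⟩) then 2 else 3))
    else 0 with hc
  obtain ⟨b, k, hbmono, hbmem, hbcol⟩ :=
    ramsey4 c (t + t) (Finset.range (4 ^ (4 * (t + t)))) (by simp)
  have hblt : ∀ i, b i < 4 ^ (4 * (t + t)) := fun i => Finset.mem_range.mp (hbmem i)
  set v : Fin (t + t) → Fin (4 ^ (4 * (t + t))) := fun i => ⟨b i, hblt i⟩ with hv
  have hvmono : StrictMono v := fun i j hij => hbmono hij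
  have keyP : ∀ i j : Fin (t + t), i < j →
      (E (x (v i)) (y (v j)) ∧ E (x (v j)) (y (v i)) ∧ k = 0) ∨
      (E (x (v i)) (y (v j)) ∧ ¬ E (x (v j)) (y (v i)) ∧ k = 1) ∨
      (¬ E (x (v i)) (y (v j)) ∧ E (x (v j)) (y (v i)) ∧ k = 2) ∨
      (¬ E (x (v i)) (y (v j)) ∧ ¬ E (x (v j)) (y (v i)) ∧ k = 3) := by
    intro i j hij
    have hkey := hbcol i j hij
    rw [hc] at hkey
    simp only at hkey
    rw [dif_pos ⟨hblt i, hblt j⟩] at hkey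
    split_ifs at hkey with h1 h2 h2
    · exact Or.inl ⟨h1, h2, hkey.symm⟩
    · exact Or.inr (Or.inl ⟨h1, h2, hkey.symm⟩)
    · exact Or.inr (Or.inr (Or.inl ⟨h1, h2, hkey.symm⟩))
    · exact Or.inr (Or.inr (Or.inr ⟨h1, h2, hkey.symm⟩))
  have hcast_lt : ∀ i j : Fin t, i < j → (Fin.castAdd t i : Fin (t + t)) < Fin.castAdd t j := by
    intro i j hij
    exact hij
  have hcast_inj : Function.Injective (fun i : Fin t => v (Fin.castAdd t i)) :=
    fun i j hij => Fin.castAdd_injective _ _ (hvmono.injective hij)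
  have hnat_inj : Function.Injective (fun i : Fin t => v (Fin.natAdd t i)) := by
    intro i j hij
    have h2 := congrArg Fin.val (hvmono.injective hij)
    simp only [Fin.coe_natAdd] at h2
    exact Fin.ext (by omega)
  have hcn : ∀ i j : Fin t, (Fin.castAdd t i : Fin (t + t)) < Fin.natAdd t j := by
    intro i j
    simp only [Fin.lt_def, Fin.coe_castAdd, Fin.coe_natAdd]
    omega
  fin_cases k
  · -- k = 0 : all edges both ways : biclique on first t indices
    right
    refine ⟨fun i => x (v (Fin.castAdd t i)), fun j => y (v (Fin.castAdd t j)),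
      hx.comp hcast_inj, hy.comp hcast_inj, ?_⟩
    intro i j
    rcases lt_trichotomy i j with h | h | h
    · rcases keyP _ _ (hcast_lt i j h) with ⟨h1, -, -⟩ | ⟨-, -, hk⟩ | ⟨-, -, hk⟩ | ⟨-, -, hk⟩
      · exact h1
      all_goals exact absurd hk (by decide)
    · subst h; exact hE _
    · rcases keyP _ _ (hcast_lt j i h) with ⟨-, h2, -⟩ | ⟨-, -, hk⟩ | ⟨-, -, hk⟩ | ⟨-, -, hk⟩
      · exact h2
      all_goals exact absurd hk (by decide)
  · -- k = 1 : edges go forward only : biclique (small x's, big y's)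
    right
    refine ⟨fun i => x (v (Fin.castAdd t i)), fun j => y (v (Fin.natAdd t j)),
      hx.comp hcast_inj, hy.comp hnat_inj, ?_⟩
    intro i j
    rcases keyP _ _ (hcn i j) with ⟨-, -, hk⟩ | ⟨h1, -, -⟩ | ⟨-, -, hk⟩ | ⟨-, -, hk⟩
    · exact absurd hk (by decide)
    · exact h1
    all_goals exact absurd hk (by decide)
  · -- k = 2 : edges go backward only : biclique (big x's, small y's)
    right
    refine ⟨fun i => x (v (Fin.natAdd t i)), fun j => y (v (Fin.castAdd t j)),
      hx.comp hnat_inj, hy.comp hcast_inj, ?_⟩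
    intro i j
    rcases keyP _ _ (hcn j i) with ⟨-, -, hk⟩ | ⟨-, -, hk⟩ | ⟨-, h2, -⟩ | ⟨-, -, hk⟩
    · exact absurd hk (by decide)
    · exact absurd hk (by decide)
    · exact h2
    · exact absurd hk (by decide)
  · -- k = 3 : no cross edges : induced matching on first t indices
    left
    refine ⟨fun i => x (v (Fin.castAdd t i)), fun j => y (v (Fin.castAdd t j)),
      hx.comp hcast_inj, hy.comp hcast_inj, fun i => hE _, ?_⟩
    intro i j hij hEij
    rcases lt_trichotomy i j with h | h | h
    · rcases keyP _ _ (hcast_lt i j h) with ⟨-, -, hk⟩ | ⟨-, -, hk⟩ | ⟨-, -, hk⟩ | ⟨h1, -, -⟩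
      · exact absurd hk (by decide)
      · exact absurd hk (by decide)
      · exact absurd hk (by decide)
      · exact h1 hEij
    · exact hij h
    · rcases keyP _ _ (hcast_lt j i h) with ⟨-, -, hk⟩ | ⟨-, -, hk⟩ | ⟨-, -, hk⟩ | ⟨-, h2, -⟩
      · exact absurd hk (by decide)
      · exact absurd hk (by decide)
      · exact absurd hk (by decide)
      · exact h2 hEij
end

section
/- Let D be an acyclic digraph, let A, B be ordered vertex sets with |A| = |B| = m such that the transitive closure D* contains an (A,B)-induced-biclique and all matching edges (a_i, b_i) are minimal in D. Let P = (v_1, …, v_p) be a directed path in D of maximum length such that no edge of P is contraction-redundant with respect to (A,B). Then for every edge e = (v_i, v_{i+1}) of P, the contracted digraph D/e is acyclic. -/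
variable {V : Type}

/-- An edge (u,v) is minimal: every directed path from u to v has length exactly 1. -/
def MinimalEdge (D : V → V → Prop) (u v : V) : Prop :=
  D u v ∧ ∀ p : List V, p.Chain' D → p.Nodup →
    p.head? = some u → p.getLast? = some v → p.length ≤ 2

/-- A digraph is acyclic. -/
def Acyclic (D : V → V → Prop) : Prop := ∀ v, ¬ Relation.TransGen D v v

/-- Representative of a vertex after contracting the edge (x,y): y is merged onto x. -/
def mergeRep [DecidableEq V] (x y z : V) : V := if z = y then x else z

/-- The digraph obtained by contracting the edge (x,y) of D (loops discarded). -/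
def contractRel [DecidableEq V] (D : V → V → Prop) (x y : V) : V → V → Prop :=
  fun a b => a ≠ b ∧ ∃ p q, D p q ∧ mergeRep x y p = a ∧ mergeRep x y q = b

/-- The transitive closure of `D` contains an (A,B)-induced-biclique (given by the
ordered families `a`, `b`). -/
def InducedBicliqueClosure {m : ℕ} (D : V → V → Prop) (a b : Fin m → V) : Prop :=
  (∀ i j, Relation.TransGen D (a i) (b j) ∧ ¬ Relation.ReflTransGen D (b j) (a i)) ∧
  (∀ i j, i ≠ j → ¬ Relation.ReflTransGen D (a i) (a j)) ∧
  (∀ i j, i ≠ j → ¬ Relation.ReflTransGen D (b i) (b j))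

/-- The edge (x,y) (not a matching edge) is contraction-redundant w.r.t. (A,B). -/
def ContractionRedundant [DecidableEq V] {m : ℕ} (D : V → V → Prop)
    (a b : Fin m → V) (x y : V) : Prop :=
  D x y ∧ (∀ i, ¬ (x = a i ∧ y = b i)) ∧
  Acyclic (contractRel D x y) ∧
  (∀ i, MinimalEdge (contractRel D x y) (mergeRep x y (a i)) (mergeRep x y (b i))) ∧
  InducedBicliqueClosure (contractRel D x y)
    (fun i => mergeRep x y (a i)) (fun i => mergeRep x y (b i))

open Relation List


section MyHelpers

private lemma myTgHead {α} {r : α → α → Prop} {x y : α} (h : TransGen r x y) :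
    ∃ c, r x c ∧ ReflTransGen r c y := by
  induction h with
  | single h => exact ⟨_, h, .refl⟩
  | tail _ e ih => obtain ⟨d, hd, hr⟩ := ih; exact ⟨d, hd, hr.tail e⟩

private lemma myChainTg {D : V → V → Prop} :
    ∀ {l : List V} {x y : V}, List.Chain D x l → y ∈ l → TransGen D x y := by
  intro l
  induction l with
  | nil => intro x y _ h; simp at h
  | cons z t ih =>
    intro x y hc hy
    replace hc := List.chain_cons.mp hc
    rcases List.mem_cons.mp hy with rfl | hy
    · exact .single hc.1
    · exact (ih hc.2 hy).head hc.1

private lemma myNodup {D : V → V → Prop} (hacy : Acyclic D) :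
    ∀ l : List V, l.Chain' D → l.Nodup := by
  intro l
  induction l with
  | nil => simp
  | cons x t ih =>
    intro hc
    have hc' : List.Chain D x t := hc
    refine List.nodup_cons.mpr ⟨fun hx => hacy x (myChainTg hc' hx), ih hc.tail⟩

private lemma myChainRtg {D : V → V → Prop} {l : List V} (h : l.Chain' D) :
    ∀ i j, (hij : i ≤ j) → (hj : j < l.length) →
      ReflTransGen D (l[i]'(by omega)) l[j] := by
  intro i j hij hj
  induction j with
  | zero => interval_cases i; exact .refl
  | succ n ihn =>
    rcases Nat.lt_or_ge i (n+1) with hlt | hge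
    · have hstep : D l[n] l[n+1] := by
        have := List.isChain_iff_getElem.mp h n (by omega)
        simpa using this
      exact (ihn (by omega) (by omega)).tail hstep
    · have : i = n + 1 := by omega
      subst this; exact .refl

private lemma myMemZipTail :
    ∀ {l : List V} {x y : V}, (x, y) ∈ l.zip l.tail → ∃ l1 l2, l = l1 ++ x :: y :: l2 := by
  intro l
  induction l with
  | nil => simp
  | cons a t ih =>
    intro x y h
    match t with
    | [] => simp at h
    | b :: t2 =>
      simp only [List.tail_cons, List.zip_cons_cons, List.mem_cons] at h
      rcases h with h | h
      · obtain ⟨rfl, rfl⟩ := Prod.mk.inj h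
        exact ⟨[], t2, rfl⟩
      · obtain ⟨l1, l2, hl⟩ := ih (by simpa using h)
        exact ⟨a :: l1, l2, by simp [hl]⟩

variable [DecidableEq V] {D : V → V → Prop} {u w : V}

private lemma myRepNeW (huw : u ≠ w) (p : V) : mergeRep u w p ≠ w := by
  unfold mergeRep; split <;> simp_all

private lemma myRepCases (huw : u ≠ w) {p x : V} (h : mergeRep u w p = x) (hx : x ≠ u) :
    p = x := by
  unfold mergeRep at h; split at h <;> simp_all

private lemma myRepU {p : V} (h : mergeRep u w p = u) : p = u ∨ p = w := by
  unfold mergeRep at h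
  split at h
  · right; assumption
  · left; exact h

private lemma myStepLift (huw : u ≠ w) {x z : V} (hx : x ≠ u) (hz : z ≠ u)
    (h : contractRel D u w x z) : D x z := by
  obtain ⟨-, p, q, hpq, hp, hq⟩ := h
  rw [myRepCases huw hp hx, myRepCases huw hq hz] at hpq
  exact hpq

private lemma myStepFromU (huw : u ≠ w) {z : V} (hz : z ≠ u)
    (h : contractRel D u w u z) : (D u z ∨ D w z) ∧ z ≠ w := by
  obtain ⟨-, p, q, hpq, hp, hq⟩ := h
  have hzw : z ≠ w := hq ▸ myRepNeW huw q
  have hq' := myRepCases huw hq hz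
  subst hq'
  refine ⟨?_, hzw⟩
  rcases myRepU hp with rfl | rfl
  · exact Or.inl hpq
  · exact Or.inr hpq

private lemma myStepToU (huw : u ≠ w) {x : V} (hx : x ≠ u)
    (h : contractRel D u w x u) : D x u ∨ D x w := by
  obtain ⟨-, p, q, hpq, hp, hq⟩ := h
  have hp' := myRepCases huw hp hx
  subst hp'
  rcases myRepU hq with rfl | rfl
  · exact Or.inl hpq
  · exact Or.inr hpq

end MyHelpers

/-- contracting any edge of a longest path (none of whose edges is
contraction-redundant) keeps the digraph acyclic. -/
theorem stmt17 [DecidableEq V] (D : V → V → Prop) (m : ℕ)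
    (hacy : Acyclic D)
    (a b : Fin m → V)
    (ha : Function.Injective a) (hb : Function.Injective b)
    (hab : ∀ i j, a i ≠ b j)
    (hbic : InducedBicliqueClosure D a b)
    (hmin : ∀ i, MinimalEdge D (a i) (b i))
    (P : List V) (hchain : P.Chain' D) (hnodup : P.Nodup)
    (hlongest : ∀ Q : List V, Q.Chain' D → Q.Nodup → Q.length ≤ P.length)
    (hnored : ∀ u w, (u, w) ∈ P.zip P.tail → ¬ ContractionRedundant D a b u w) :
    ∀ u w, (u, w) ∈ P.zip P.tail → Acyclic (contractRel D u w) := by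
  intro u w hmem
  obtain ⟨P1, P2, hP⟩ := myMemZipTail hmem
  subst hP
  obtain ⟨hcP1, hcuw, hbd⟩ := List.isChain_append.mp hchain
  have hd : D u w := (List.isChain_cons_cons.mp hcuw).1
  have hcwP2 : (w :: P2).Chain' D := (List.isChain_cons_cons.mp hcuw).2
  have huw : u ≠ w := by rintro rfl; exact hacy u (.single hd)
  -- facts from nodup of P
  have hnP1 : P1.Nodup := hnodup.of_append_left
  have hnrest : (u :: w :: P2).Nodup := hnodup.of_append_right
  have hdisj : P1.Disjoint (u :: w :: P2) := List.disjoint_of_nodup_append hnodup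
  have huP1 : u ∉ P1 := fun h => hdisj h (by simp)
  have hwP1 : w ∉ P1 := fun h => hdisj h (by simp)
  have huP2 : u ∉ P2 := by
    have := List.nodup_cons.mp hnrest
    exact fun h => this.1 (by simp [h])
  have hwP2 : w ∉ P2 := by
    have := List.nodup_cons.mp (List.nodup_cons.mp hnrest).2
    exact fun h => this.1 h
  have hnP2 : P2.Nodup := (List.nodup_cons.mp (List.nodup_cons.mp hnrest).2).2
  -- the "bad path" contradiction via the longest-path property
  have badFalse : ∀ x, x ≠ u → x ≠ w → D u x → Relation.ReflTransGen D x w → False := by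
    intro x hxu hxw hux hxwr
    obtain ⟨l, hchl, hlast⟩ := List.exists_isChain_cons_of_relationReflTransGen hxwr
    have hM : (x :: l).Chain' D := hchl
    set M := x :: l with hMdef
    have hMne : M ≠ [] := by simp [hMdef]
    have hlast' : M.getLast hMne = w := hlast
    have hlne : l ≠ [] := by
      rintro rfl
      simp [hMdef, List.getLast] at hlast'
      exact hxw hlast'
    have hMlen : 2 ≤ M.length := by
      rcases l with _ | ⟨y, l'⟩
      · exact absurd rfl hlne
      · simp [hMdef]
    have hMnodup : M.Nodup := myNodup hacy M hM
    have hMw : M[M.length - 1]'(by omega) = w := by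
      rw [← List.getLast_eq_getElem hMne]; exact hlast'
    have hMx : M[0]'(by omega) = x := rfl
    -- every vertex of M is either w or not on P
    have hclaim : ∀ z ∈ M, z = w ∨ z ∉ (P1 ++ u :: w :: P2) := by
      intro z hz
      by_cases hzw : z = w
      · exact Or.inl hzw
      right
      intro hzP
      obtain ⟨t, ht, hMt⟩ := List.mem_iff_getElem.mp hz
      have hrtg_xz : Relation.ReflTransGen D x z := by
        have h0 := myChainRtg hM 0 t (Nat.zero_le _) ht
        rwa [hMx, hMt] at h0
      have hrtg_zw : Relation.ReflTransGen D z w := by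
        have h2 := myChainRtg hM t (M.length - 1) (by omega) (by omega)
        rwa [hMt, hMw] at h2
      have htg_uz : Relation.TransGen D u z := Relation.TransGen.head' hux hrtg_xz
      have htg_zw : Relation.TransGen D z w := by
        rcases Relation.reflTransGen_iff_eq_or_transGen.mp hrtg_zw with h | h
        · exact absurd h.symm hzw
        · exact h
      rcases List.mem_append.mp hzP with hz1 | hz2
      · -- z ∈ P1 : z reaches u along P, contradiction
        have hpre : (P1 ++ [u]).Chain' D := hchain.prefix ⟨w :: P2, by simp⟩
        obtain ⟨t1, ht1, hPt1⟩ := List.mem_iff_getElem.mp hz1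
        have hlen1 : (P1 ++ [u]).length = P1.length + 1 := by simp
        have hr : Relation.ReflTransGen D z u := by
          have h3 := myChainRtg hpre t1 P1.length (by omega) (by simp)
          have e1 : (P1 ++ [u])[t1]'(by simp; omega) = z := by
            rw [List.getElem_append_left ht1]; exact hPt1
          have e2 : (P1 ++ [u])[P1.length]'(by simp) = u := by
            simp
          rwa [e1, e2] at h3
        exact hacy z (Relation.TransGen.trans_left htg_uz hr |> fun h => by
          exact Relation.TransGen.trans_right hr htg_uz)
      · rcases List.mem_cons.mp hz2 with rfl | hz3
        · exact hacy z htg_uz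
        rcases List.mem_cons.mp hz3 with rfl | hz4
        · exact hzw rfl
        · obtain ⟨t2, ht2, hPt2⟩ := List.mem_iff_getElem.mp hz4
          have hr : Relation.ReflTransGen D w z := by
            have h3 := myChainRtg hcwP2 0 (t2 + 1) (by omega) (by simp; omega)
            have e1 : (w :: P2)[0]'(by simp) = w := rfl
            have e2 : (w :: P2)[t2 + 1]'(by simp; omega) = z := by
              simp only [List.getElem_cons_succ]; exact hPt2
            rwa [e1, e2] at h3
          exact hacy w (Relation.TransGen.trans_right hr htg_zw)
    -- build the longer path Q
    have hMlast? : M.getLast? = some w := by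
      rw [List.getLast?_eq_getLast hMne, hlast']
    have h1 : (M ++ P2).Chain' D := by
      refine hM.append hcwP2.tail ?_
      intro p hp q hq
      rw [hMlast?] at hp
      obtain rfl : w = p := by simpa using hp
      have := (List.isChain_cons.mp hcwP2).1
      apply this
      simpa using hq
    have h2 : (u :: (M ++ P2)).Chain' D := by
      apply List.isChain_cons.mpr
      refine ⟨?_, h1⟩
      intro y hy
      have hh : (M ++ P2).head? = some x := by simp [hMdef]
      rw [hh] at hy
      obtain rfl : x = y := by simpa using hy
      exact hux
    have hQc : (P1 ++ u :: (M ++ P2)).Chain' D := by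
      refine hcP1.append h2 ?_
      intro p0 hp0 q0 hq0
      obtain rfl : u = q0 := by simpa using hq0
      exact hbd p0 hp0 u (by simp)
    have huM : u ∉ M := by
      intro h
      rcases hclaim u h with h' | h'
      · exact huw h'
      · exact h' (by simp)
    have hwM : w ∈ M := by
      rw [← hMw]; exact List.getElem_mem _
    have hMdisjP2 : M.Disjoint P2 := by
      intro z hz hz2
      rcases hclaim z hz with rfl | h'
      · exact hwP2 hz2
      · exact h' (by simp [hz2])
    have hP1disjM : P1.Disjoint M := by
      intro z hz hzM
      rcases hclaim z hzM with rfl | h'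
      · exact hwP1 hz
      · exact h' (by simp [hz])
    have hQn : (P1 ++ u :: (M ++ P2)).Nodup := by
      rw [List.nodup_append]
      refine ⟨hnP1, ?_, ?_⟩
      · rw [List.nodup_cons]
        constructor
        · intro h
          rcases List.mem_append.mp h with h | h
          · exact huM h
          · exact huP2 h
        · rw [List.nodup_append]
          exact ⟨hMnodup, hnP2, fun _ ha _ hb h => hMdisjP2 ha (h ▸ hb)⟩
      · intro z hz _ hz' rfl
        rcases List.mem_cons.mp hz' with rfl | hz''
        · exact huP1 hz
        rcases List.mem_append.mp hz'' with h | h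
        · exact hP1disjM hz h
        · exact hdisj hz (by simp [h])
    have hle := hlongest _ hQc hQn
    simp only [List.length_append, List.length_cons] at hle ⊢
    omega
  -- now show acyclicity of the contraction
  set C := contractRel D u w with hCdef
  intro v hv
  by_cases hu : Relation.TransGen C u u
  · obtain ⟨c, hc1, hc2⟩ := myTgHead hu
    have hcu : c ≠ u := by rintro rfl; exact hc1.1 rfl
    obtain ⟨hDc, hcw2⟩ := myStepFromU huw hcu hc1
    have key : ∀ x, Relation.ReflTransGen C x u → x ≠ u →
        Relation.ReflTransGen D x u ∨ Relation.ReflTransGen D x w := by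
      intro x hx
      induction hx using Relation.ReflTransGen.head_induction_on with
      | refl => intro h; exact absurd rfl h
      | @head p q h' hrest ih =>
        intro hpu
        by_cases hqu : q = u
        · subst hqu
          rcases myStepToU huw hpu h' with h | h
          · exact Or.inl (.single h)
          · exact Or.inr (.single h)
        · have hD := myStepLift huw hpu hqu h'
          rcases ih hqu with h | h
          · exact Or.inl (h.head hD)
          · exact Or.inr (h.head hD)
    rcases key c hc2 hcu with h | h
    · rcases hDc with h0 | h0
      · exact hacy u (Relation.TransGen.head' h0 h)
      · exact hacy w (Relation.TransGen.head' h0 (h.tail hd))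
    · rcases hDc with h0 | h0
      · exact badFalse c hcu hcw2 h0 h
      · exact hacy w (Relation.TransGen.head' h0 h)
  · have hvu : v ≠ u := fun h => hu (h ▸ hv)
    obtain ⟨c, hc1, hc2⟩ := myTgHead hv
    have noncyc : ∀ z, Relation.ReflTransGen C v z → Relation.ReflTransGen C z v → z ≠ u := by
      intro z h1 h2 hz
      subst hz
      exact hu ((Relation.TransGen.trans_right h2 hv).trans_left h1)
    have key2 : ∀ x, Relation.ReflTransGen C x v →
        Relation.ReflTransGen C v x → Relation.ReflTransGen D x v := by
      intro x hx
      induction hx using Relation.ReflTransGen.head_induction_on with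
      | refl => intro _; exact .refl
      | @head p q h' hrest ih =>
        intro hvp
        have hvq : Relation.ReflTransGen C v q := hvp.tail h'
        have hpv : Relation.ReflTransGen C p v := hrest.head h'
        have hpne := noncyc p hvp hpv
        have hqne := noncyc q hvq hrest
        exact (ih hvq).head (myStepLift huw hpne hqne h')
    have hcne : c ≠ u := noncyc c (.single hc1) hc2
    have hDvc := myStepLift huw hvu hcne hc1
    exact hacy v (Relation.TransGen.head' hDvc (key2 c hc2 (.single hc1)))
end
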